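/- arXiv:2010.05965 — 11 statements merged into one kernel-verified Lean document; each statement's English description precedes it below -/
import Mathlib

section
/- Let U, X, Y, Z be finite sets and let P be a joint probability mass function on U × X × Y × Z such that U and Y are conditionally independent given (X,Z) (i.e., the Markov chain U − (X,Z) − Y holds). Fix z ∈ Z with P_Z(z) > 0 and let S = {x ∈ X : P_{X|Z}(x|z) > 0}. Then ∑_{y ∈ Y} max_{u ∈ U} P_{U,Y|Z}(u, y | z) ≤ (max_{u ∈ U} P_{U|Z}(u | z)) · ∑_{y ∈ Y} max_{x ∈ S} P_{Y|X,Z}(y | x, z). -/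
open Finset NNReal

lemma stmt0_aux {U X Y : Type*} [Fintype U] [Fintype X] [Fintype Y]
    (Q : U → X → Y → ℝ≥0)
    (hM : ∀ u x y, Q u x y * (∑ u', ∑ y', Q u' x y') =
        (∑ y', Q u x y') * (∑ u', Q u' x y))
    (T : ℝ≥0) (hT : 0 < T) :
    ∑ y, (Finset.univ.sup fun u => (∑ x, Q u x y) / T) ≤
      (Finset.univ.sup fun u => (∑ x, ∑ y, Q u x y) / T) *
      ∑ y, ((Finset.univ.filter fun x => 0 < (∑ u, ∑ y', Q u x y') / T).sup
          fun x => (∑ u, Q u x y) / (∑ u, ∑ y', Q u x y')) := by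
  have hTne : T ≠ 0 := ne_of_gt hT
  have hfil : (Finset.univ.filter fun x => 0 < (∑ u, ∑ y', Q u x y') / T) =
      (Finset.univ.filter fun x => 0 < ∑ u, ∑ y', Q u x y') := by
    apply Finset.filter_congr
    intro x _
    rw [pos_iff_ne_zero, pos_iff_ne_zero, div_ne_zero_iff]
    exact ⟨fun h => h.1, fun h => ⟨h, hTne⟩⟩
  rw [hfil]
  set S : Finset X := Finset.univ.filter fun x => 0 < ∑ u, ∑ y', Q u x y' with hS
  set g : Y → ℝ≥0 := fun y => S.sup fun x => (∑ u, Q u x y) / (∑ u, ∑ y', Q u x y')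
    with hg
  set M : ℝ≥0 := Finset.univ.sup fun u => (∑ x, ∑ y, Q u x y) / T with hMdef
  have key : ∀ y u, (∑ x, Q u x y) ≤ (∑ x, ∑ y', Q u x y') * g y := by
    intro y u
    have h1 : ∑ x, Q u x y = ∑ x ∈ S, Q u x y := by
      symm
      apply Finset.sum_subset (Finset.subset_univ _)
      intro x _ hx
      have hA0 : (∑ u', ∑ y', Q u' x y') = 0 := by
        by_contra h
        exact hx (Finset.mem_filter.mpr ⟨Finset.mem_univ x, pos_iff_ne_zero.mpr h⟩)
      have hle : Q u x y ≤ ∑ u', ∑ y', Q u' x y' := by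
        calc Q u x y ≤ ∑ y', Q u x y' :=
              Finset.single_le_sum (fun _ _ => zero_le) (Finset.mem_univ y)
          _ ≤ ∑ u', ∑ y', Q u' x y' :=
              Finset.single_le_sum (f := fun u' => ∑ y', Q u' x y')
                (fun _ _ => zero_le) (Finset.mem_univ u)
      exact le_antisymm (hA0 ▸ hle) zero_le
    rw [h1]
    have h2 : ∀ x ∈ S, Q u x y ≤ (∑ y', Q u x y') * g y := by
      intro x hxS
      have hApos : 0 < ∑ u', ∑ y', Q u' x y' := (Finset.mem_filter.mp hxS).2
      have hAne : (∑ u', ∑ y', Q u' x y') ≠ 0 := ne_of_gt hApos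
      have heq : Q u x y = (∑ y', Q u x y') *
          ((∑ u', Q u' x y) / (∑ u', ∑ y', Q u' x y')) := by
        rw [← mul_div_assoc, eq_div_iff hAne]
        exact hM u x y
      rw [heq]
      exact mul_le_mul_right (Finset.le_sup (f := fun x =>
        (∑ u', Q u' x y) / (∑ u', ∑ y', Q u' x y')) hxS) _
    calc ∑ x ∈ S, Q u x y ≤ ∑ x ∈ S, (∑ y', Q u x y') * g y :=
          Finset.sum_le_sum h2
      _ = (∑ x ∈ S, ∑ y', Q u x y') * g y := by rw [Finset.sum_mul]
      _ ≤ (∑ x, ∑ y', Q u x y') * g y := by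
          apply mul_le_mul_left
          exact Finset.sum_le_sum_of_subset (Finset.subset_univ _)
  calc ∑ y, (Finset.univ.sup fun u => (∑ x, Q u x y) / T)
      ≤ ∑ y, M * g y := by
        apply Finset.sum_le_sum
        intro y _
        apply Finset.sup_le
        intro u _
        calc (∑ x, Q u x y) / T ≤ ((∑ x, ∑ y', Q u x y') * g y) / T := by
              rw [div_eq_mul_inv, div_eq_mul_inv]
              exact mul_le_mul_left (key y u) _
          _ = ((∑ x, ∑ y', Q u x y') / T) * g y := by
              rw [mul_div_right_comm]
          _ ≤ M * g y := mul_le_mul_left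
              (Finset.le_sup (f := fun u => (∑ x, ∑ y, Q u x y) / T)
                (Finset.mem_univ u)) _
    _ = M * ∑ y, g y := by rw [← Finset.mul_sum]

/-- Upper-bound half of the simplification of pointwise conditional
maximal leakage. `P` is a joint pmf on `U × X × Y × Z` (values in `ℝ≥0`, summing to 1),
satisfying the Markov chain `U − (X,Z) − Y` (expressed multiplicatively, i.e.
`P_{U,X,Y,Z}(u,x,y,z) · P_{X,Z}(x,z) = P_{U,X,Z}(u,x,z) · P_{X,Y,Z}(x,y,z)`).
Conditional pmfs are written as ratios of marginals. -/
theorem stmt0 {U X Y Z : Type*} [Fintype U] [Fintype X] [Fintype Y] [Fintype Z]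
    (P : U → X → Y → Z → ℝ≥0)
    (hsum : ∑ u, ∑ x, ∑ y, ∑ z, P u x y z = 1)
    (hMarkov : ∀ u x y z,
      P u x y z * (∑ u', ∑ y', P u' x y' z) =
        (∑ y', P u x y' z) * (∑ u', P u' x y z))
    (z : Z)
    (hz : 0 < ∑ u, ∑ x, ∑ y, P u x y z) :
    ∑ y, (Finset.univ.sup fun u =>
        (∑ x, P u x y z) / (∑ u', ∑ x, ∑ y', P u' x y' z)) ≤
      (Finset.univ.sup fun u =>
        (∑ x, ∑ y, P u x y z) / (∑ u', ∑ x, ∑ y', P u' x y' z)) *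
      ∑ y, ((Finset.univ.filter fun x =>
            0 < (∑ u, ∑ y', P u x y' z) / (∑ u, ∑ x', ∑ y', P u x' y' z)).sup
          fun x => (∑ u, P u x y z) / (∑ u, ∑ y', P u x y' z)) := by
  exact stmt0_aux (fun u x y => P u x y z) (fun u x y => hMarkov u x y z)
    (∑ u, ∑ x, ∑ y, P u x y z) hz
end

section
/- Let X, Y, Z be finite sets and P a joint probability mass function on X × Y × Z. Fix z ∈ Z with P_Z(z) > 0 and let S = {x ∈ X : P_{X|Z}(x|z) > 0}. Define the pointwise conditional maximal leakage L(X→Y | Z=z) as the supremum, over all finite sets U and all joint pmfs Q on U × X × Y × Z whose (X,Y,Z)-marginal equals P and under which U and Y are conditionally independent given (X,Z), of log[(∑_{y} max_{u} Q_{U,Y|Z}(u,y|z)) / (max_{u} Q_{U|Z}(u|z))]. Then L(X→Y | Z=z) = log ∑_{y ∈ Y} max_{x ∈ S} P_{Y|X,Z}(y | x, z). -/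
open Finset NNReal

/-- sup of f/c equals (sup f)/c in ℝ≥0. -/
lemma sup_div_nnreal {α : Type*} (s : Finset α) (f : α → ℝ≥0) (c : ℝ≥0) :
    (s.sup fun i => f i / c) = (s.sup f) / c := by
  simp only [div_eq_mul_inv]
  exact (Finset.comp_sup_eq_sup_comp (· * c⁻¹)
    (fun a b => Monotone.map_max (fun x y h => mul_le_mul_left h _)) (zero_mul _)).symm

/-- The leakage-ratio expression simplifies: the normalization T cancels. -/
lemma leak_expr_eq {X Y Z : Type*} [Fintype X] [Fintype Y]
    (U : Type) (inst : Fintype U) (Q : U → X → Y → Z → ℝ≥0) (z : Z)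
    (hT0 : (Finset.sum inst.elems fun u' => ∑ x, ∑ y', Q u' x y' z) ≠ 0) :
    Real.log
          (((∑ y, Finset.sup inst.elems fun u =>
              (∑ x, Q u x y z) /
                (Finset.sum inst.elems fun u' => ∑ x, ∑ y', Q u' x y' z) : ℝ≥0) : ℝ) /
           ((Finset.sup inst.elems fun u =>
              (∑ x, ∑ y, Q u x y z) /
                (Finset.sum inst.elems fun u' => ∑ x, ∑ y', Q u' x y' z) : ℝ≥0) : ℝ)) =
    Real.log
      (((∑ y, Finset.sup inst.elems fun u => ∑ x, Q u x y z : ℝ≥0) : ℝ) /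
       ((Finset.sup inst.elems fun u => ∑ x, ∑ y, Q u x y z : ℝ≥0) : ℝ)) := by
  set T : ℝ≥0 := Finset.sum inst.elems fun u' => ∑ x, ∑ y', Q u' x y' z with hTdef
  have h1 : ∀ y : Y, (Finset.sup inst.elems fun u => (∑ x, Q u x y z) / T)
      = (Finset.sup inst.elems fun u => ∑ x, Q u x y z) / T := fun y =>
    sup_div_nnreal _ _ _
  have h2 : (Finset.sup inst.elems fun u => (∑ x, ∑ y, Q u x y z) / T)
      = (Finset.sup inst.elems fun u => ∑ x, ∑ y, Q u x y z) / T :=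
    sup_div_nnreal _ _ _
  have h3 : (∑ y, Finset.sup inst.elems fun u => (∑ x, Q u x y z) / T)
      = (∑ y, Finset.sup inst.elems fun u => ∑ x, Q u x y z) / T := by
    rw [Finset.sum_congr rfl fun y _ => h1 y, Finset.sum_div]
  rw [h3, h2]
  push_cast [NNReal.coe_div]
  rw [div_div_div_cancel_right₀]
  exact_mod_cast hT0

/-- The pointwise conditional maximal leakage, defined as the supremum
over all finite sets `U` (given by a `Fintype` instance) and all joint pmfs `Q` on
`U × X × Y × Z` whose `(X,Y,Z)`-marginal is `P` and under which `U ⟂ Y | (X,Z)`,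
of `log [ (∑_y max_u Q_{U,Y|Z}(u,y|z)) / (max_u Q_{U|Z}(u|z)) ]`, equals
`log ∑_y max_{x : P_{X|Z}(x|z)>0} P_{Y|X,Z}(y|x,z)`.
Sums and sups over `U` are taken over `inst.elems = Finset.univ` of the finite set. -/
theorem stmt1 {X Y Z : Type*} [Fintype X] [Fintype Y] [Fintype Z]
    (P : X → Y → Z → ℝ≥0)
    (hsum : ∑ x, ∑ y, ∑ z, P x y z = 1)
    (z : Z)
    (hz : 0 < ∑ x, ∑ y, P x y z) :
    sSup { r : ℝ | ∃ (U : Type) (inst : Fintype U) (Q : U → X → Y → Z → ℝ≥0),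
        (∀ x y z', Finset.sum inst.elems (fun u => Q u x y z') = P x y z') ∧
        (∀ u x y z', Q u x y z' *
            (Finset.sum inst.elems fun u' => ∑ y', Q u' x y' z') =
          (∑ y', Q u x y' z') * (Finset.sum inst.elems fun u' => Q u' x y z')) ∧
        r = Real.log
          (((∑ y, Finset.sup inst.elems fun u =>
              (∑ x, Q u x y z) /
                (Finset.sum inst.elems fun u' => ∑ x, ∑ y', Q u' x y' z) : ℝ≥0) : ℝ) /
           ((Finset.sup inst.elems fun u =>
              (∑ x, ∑ y, Q u x y z) /
                (Finset.sum inst.elems fun u' => ∑ x, ∑ y', Q u' x y' z) : ℝ≥0) : ℝ)) } =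
      Real.log
        ((∑ y, (Finset.univ.filter fun x =>
            0 < (∑ y', P x y' z) / (∑ x', ∑ y', P x' y' z)).sup
          (fun x => P x y z / (∑ y', P x y' z)) : ℝ≥0) : ℝ) := by
  classical
  -- notation
  set T : ℝ≥0 := ∑ x, ∑ y, P x y z with hTdef
  have hT0 : T ≠ 0 := hz.ne'
  set Px : X → ℝ≥0 := fun x => ∑ y', P x y' z with hPx
  set Sf : Finset X := Finset.univ.filter fun x => 0 < Px x / T with hSfdef
  have hmemSf : ∀ x : X, x ∈ Sf ↔ 0 < Px x := by
    intro x
    simp only [hSfdef, Finset.mem_filter, Finset.mem_univ, true_and, pos_iff_ne_zero, ne_eq,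
      div_eq_zero_iff, not_or]
    exact ⟨fun h => h.1, fun h => ⟨h, hT0⟩⟩
  set c : Y → ℝ≥0 := fun y => Sf.sup (fun x => P x y z / Px x) with hcdef
  set C : ℝ≥0 := ∑ y, c y with hCdef
  have hTsum : T = ∑ x, Px x := rfl
  -- Sf is nonempty
  obtain ⟨x0, -, hx0⟩ := Finset.exists_ne_zero_of_sum_ne_zero (hTsum ▸ hT0)
  have hx0' : 0 < Px x0 := pos_iff_ne_zero.mpr hx0
  have hx0S : x0 ∈ Sf := (hmemSf x0).mpr hx0'
  -- C ≥ 1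
  have hC1 : 1 ≤ C := by
    have h1 : (1 : ℝ≥0) = ∑ y, P x0 y z / Px x0 := by
      rw [← Finset.sum_div]
      exact (div_self hx0).symm
    rw [h1, hCdef]
    exact Finset.sum_le_sum fun y _ => by
      simp only [hcdef]; exact Finset.le_sup (f := fun x => P x y z / Px x) hx0S
  have hCpos : (0:ℝ≥0) < C := lt_of_lt_of_le one_pos hC1
  have hCRpos : (0:ℝ) < (C:ℝ) := by exact_mod_cast hCpos
  ---------------------------------------------------------------------------
  -- UPPER BOUND
  ---------------------------------------------------------------------------
  have key : ∀ (U : Type) (inst : Fintype U) (Q : U → X → Y → Z → ℝ≥0),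
      (∀ x y z', Finset.sum inst.elems (fun u => Q u x y z') = P x y z') →
      (∀ u x y z', Q u x y z' *
            (Finset.sum inst.elems fun u' => ∑ y', Q u' x y' z') =
          (∑ y', Q u x y' z') * (Finset.sum inst.elems fun u' => Q u' x y z')) →
      (Finset.sum inst.elems fun u' => ∑ x, ∑ y', Q u' x y' z) = T ∧
      Real.log
        (((∑ y, Finset.sup inst.elems fun u => ∑ x, Q u x y z : ℝ≥0) : ℝ) /
         ((Finset.sup inst.elems fun u => ∑ x, ∑ y, Q u x y z : ℝ≥0) : ℝ))
        ≤ Real.log (C : ℝ) := by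
    intro U inst Q hmarg hCI
    have hQT : (Finset.sum inst.elems fun u' => ∑ x, ∑ y', Q u' x y' z) = T := by
      rw [Finset.sum_comm]
      refine Finset.sum_congr rfl fun x _ => ?_
      rw [Finset.sum_comm]
      simp only [hmarg]
    refine ⟨hQT, ?_⟩
    set A : ℝ≥0 := ∑ y, Finset.sup inst.elems fun u => ∑ x, Q u x y z with hA
    set B : ℝ≥0 := Finset.sup inst.elems fun u => ∑ x, ∑ y, Q u x y z with hB
    -- pointwise bound from conditional independence
    have hkey : ∀ u x y, Q u x y z ≤ c y * ∑ y', Q u x y' z := by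
      intro u x y
      by_cases hx : 0 < Px x
      · have hCIe := hCI u x y z
        have e1 : (Finset.sum inst.elems fun u' => ∑ y', Q u' x y' z) = Px x := by
          rw [Finset.sum_comm]
          simp only [hmarg]; rfl
        have e2 : (Finset.sum inst.elems fun u' => Q u' x y z) = P x y z := hmarg x y z
        rw [e1, e2] at hCIe
        have hQx : Q u x y z = (∑ y', Q u x y' z) * P x y z / Px x := by
          rw [eq_div_iff hx.ne']; exact hCIe
        rw [hQx, mul_div_assoc]
        rw [mul_comm]
        refine mul_le_mul_left ?_ _
        simp only [hcdef]
        exact Finset.le_sup (f := fun x => P x y z / Px x) ((hmemSf x).mpr hx)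
      · have hx0 : Px x = 0 := le_antisymm (le_of_not_gt hx) (zero_le)
        have h2 : P x y z ≤ Px x :=
          Finset.single_le_sum (f := fun y' => P x y' z) (fun _ _ => zero_le)
            (Finset.mem_univ y)
        have h1 : Q u x y z ≤ P x y z := by
          rw [← hmarg x y z]
          exact Finset.single_le_sum (f := fun u' => Q u' x y z) (fun _ _ => zero_le)
            (Fintype.complete u)
        have : Q u x y z = 0 := le_antisymm ((h1.trans h2).trans_eq hx0) (zero_le)
        simp [this]
    have hsupA : ∀ y, (Finset.sup inst.elems fun u => ∑ x, Q u x y z) ≤ c y * B := by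
      intro y
      refine Finset.sup_le fun u hu => ?_
      calc ∑ x, Q u x y z ≤ ∑ x, c y * ∑ y', Q u x y' z :=
            Finset.sum_le_sum fun x _ => hkey u x y
        _ = c y * ∑ x, ∑ y', Q u x y' z := by rw [Finset.mul_sum]
        _ ≤ c y * B := mul_le_mul_right
            (Finset.le_sup (f := fun u => ∑ x, ∑ y, Q u x y z) hu) _
    have hACB : A ≤ C * B := by
      rw [hA, hCdef, Finset.sum_mul]
      exact Finset.sum_le_sum fun y _ => hsupA y
    -- positivity of B and A
    obtain ⟨u1, hu1mem, hu1⟩ := Finset.exists_ne_zero_of_sum_ne_zero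
      (fun h => hT0 (hQT ▸ h))
    have hBpos : 0 < B :=
      lt_of_lt_of_le (pos_iff_ne_zero.mpr hu1)
        (Finset.le_sup (f := fun u => ∑ x, ∑ y, Q u x y z) hu1mem)
    have hApos : 0 < A := by
      have h1 : (∑ y, ∑ x, Q u1 x y z) ≠ 0 := by
        rw [Finset.sum_comm]; exact hu1
      obtain ⟨y1, -, hy1⟩ := Finset.exists_ne_zero_of_sum_ne_zero h1
      refine Finset.sum_pos' (fun y _ => zero_le) ⟨y1, Finset.mem_univ y1, ?_⟩
      exact lt_of_lt_of_le (pos_iff_ne_zero.mpr hy1)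
        (Finset.le_sup (f := fun u => ∑ x, Q u x y1 z) hu1mem)
    have hBR : (0:ℝ) < (B:ℝ) := by exact_mod_cast hBpos
    have hAR : (0:ℝ) < (A:ℝ) := by exact_mod_cast hApos
    have hfrac : (A:ℝ)/(B:ℝ) ≤ (C:ℝ) := by
      rw [div_le_iff₀ hBR]
      exact_mod_cast hACB
    exact Real.log_le_log (div_pos hAR hBR) hfrac
  ---------------------------------------------------------------------------
  -- set shape
  have hub : ∀ r ∈ { r : ℝ | ∃ (U : Type) (inst : Fintype U) (Q : U → X → Y → Z → ℝ≥0),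
        (∀ x y z', Finset.sum inst.elems (fun u => Q u x y z') = P x y z') ∧
        (∀ u x y z', Q u x y z' *
            (Finset.sum inst.elems fun u' => ∑ y', Q u' x y' z') =
          (∑ y', Q u x y' z') * (Finset.sum inst.elems fun u' => Q u' x y z')) ∧
        r = Real.log
          (((∑ y, Finset.sup inst.elems fun u =>
              (∑ x, Q u x y z) /
                (Finset.sum inst.elems fun u' => ∑ x, ∑ y', Q u' x y' z) : ℝ≥0) : ℝ) /
           ((Finset.sup inst.elems fun u =>
              (∑ x, ∑ y, Q u x y z) /
                (Finset.sum inst.elems fun u' => ∑ x, ∑ y', Q u' x y' z) : ℝ≥0) : ℝ)) },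
      r ≤ Real.log (C:ℝ) := by
    rintro r ⟨U, inst, Q, hmarg, hCI, rfl⟩
    obtain ⟨hQT, hle⟩ := key U inst Q hmarg hCI
    rw [leak_expr_eq U inst Q z (by rw [hQT]; exact hT0)]
    exact hle
  ---------------------------------------------------------------------------
  -- ACHIEVABILITY
  ---------------------------------------------------------------------------
  have ach : ∀ w : ℝ, w < Real.log (C:ℝ) →
      ∃ r ∈ { r : ℝ | ∃ (U : Type) (inst : Fintype U) (Q : U → X → Y → Z → ℝ≥0),
        (∀ x y z', Finset.sum inst.elems (fun u => Q u x y z') = P x y z') ∧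
        (∀ u x y z', Q u x y z' *
            (Finset.sum inst.elems fun u' => ∑ y', Q u' x y' z') =
          (∑ y', Q u x y' z') * (Finset.sum inst.elems fun u' => Q u' x y z')) ∧
        r = Real.log
          (((∑ y, Finset.sup inst.elems fun u =>
              (∑ x, Q u x y z) /
                (Finset.sum inst.elems fun u' => ∑ x, ∑ y', Q u' x y' z) : ℝ≥0) : ℝ) /
           ((Finset.sup inst.elems fun u =>
              (∑ x, ∑ y, Q u x y z) /
                (Finset.sum inst.elems fun u' => ∑ x, ∑ y', Q u' x y' z) : ℝ≥0) : ℝ)) },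
      w < r := by
    intro w hw
    -- exp w < C
    have hE : Real.exp w < (C:ℝ) := by
      have h := Real.exp_lt_exp.mpr hw
      rwa [Real.exp_log hCRpos] at h
    set E : ℝ := Real.exp w with hEdef
    have hEpos : 0 < E := Real.exp_pos w
    have hSfne : Sf.Nonempty := ⟨x0, hx0S⟩
    set p0 : ℝ≥0 := Sf.inf' hSfne Px with hp0def
    have hp0pos : 0 < p0 := by
      obtain ⟨xm, hxm, hxmeq⟩ := Finset.exists_mem_eq_inf' hSfne Px
      rw [hp0def, hxmeq]
      exact (hmemSf xm).mp hxm
    have hp0le : ∀ x ∈ Sf, p0 ≤ Px x := fun x hx => Finset.inf'_le Px hx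
    have hp0R : (0:ℝ) < (p0:ℝ) := by exact_mod_cast hp0pos
    -- choose N
    obtain ⟨N, hN⟩ := exists_nat_gt (max 1 (E / ((p0:ℝ) * ((C:ℝ) - E))))
    have hN1 : (1:ℝ) < (N:ℝ) := lt_of_le_of_lt (le_max_left _ _) hN
    have hN0 : (0:ℝ) < (N:ℝ) := by linarith
    have hN0' : (0:ℝ≥0) < (N:ℝ≥0) := by
      have : N ≠ 0 := by exact_mod_cast hN0.ne'
      exact pos_iff_ne_zero.mpr (by exact_mod_cast this)
    have hNgt : E / ((p0:ℝ) * ((C:ℝ) - E)) < (N:ℝ) := lt_of_le_of_lt (le_max_right _ _) hN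
    have hCE : (0:ℝ) < (C:ℝ) - E := by linarith
    have hkeyN : E < (C:ℝ) * (((N:ℝ) * (p0:ℝ)) / ((N:ℝ) * (p0:ℝ) + 1)) := by
      have h1 : E < (N:ℝ) * ((p0:ℝ) * ((C:ℝ) - E)) := by
        rw [div_lt_iff₀ (by positivity)] at hNgt
        linarith
      rw [mul_div_assoc', lt_div_iff₀ (by positivity)]
      nlinarith
    -- the shattering construction
    set a : X → ℕ := fun x => ⌈(N : ℝ≥0) * Px x⌉₊ with hadef
    have ha_pos : ∀ x, 0 < Px x → 0 < a x := fun x hx => Nat.ceil_pos.mpr (mul_pos hN0' hx)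
    have ha_le : ∀ x, (N:ℝ≥0) * Px x ≤ (a x : ℝ≥0) := fun x => Nat.le_ceil _
    have ha_lt : ∀ x, ((a x : ℝ≥0)) < (N:ℝ≥0) * Px x + 1 := fun x =>
      Nat.ceil_lt_add_one (zero_le)
    have ha_zero : ∀ x, Px x = 0 → a x = 0 := by intro x hx; simp [hadef, hx]
    haveI hne' : Nonempty ((x : X) × Fin (a x)) := ⟨⟨x0, ⟨0, ha_pos x0 hx0'⟩⟩⟩
    set K : ℕ := Fintype.card ((x : X) × Fin (a x)) with hKdef
    have hKne : K ≠ 0 := Fintype.card_ne_zero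
    have hK : (K:ℝ≥0) ≠ 0 := by exact_mod_cast hKne
    set e : Fin K ≃ ((x : X) × Fin (a x)) := (Fintype.equivFin _).symm with hedef
    set V : X → Z → Fin K → ℝ≥0 := fun x z' u =>
      if z' = z ∧ 0 < Px x then (if (e u).1 = x then ((a x : ℝ≥0))⁻¹ else 0)
      else (K : ℝ≥0)⁻¹ with hVdef
    set Q : Fin K → X → Y → Z → ℝ≥0 := fun u x y z' => P x y z' * V x z' u with hQdef
    have hVsum : ∀ x z', ∑ u : Fin K, V x z' u = 1 := by
      intro x z'
      by_cases h : z' = z ∧ 0 < Px x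
      · have ha0 : ((a x : ℝ≥0)) ≠ 0 := by exact_mod_cast (ha_pos x h.2).ne'
        have hV1 : ∀ u : Fin K, V x z' u = (if (e u).1 = x then ((a x : ℝ≥0))⁻¹ else 0) :=
          fun u => by simp only [hVdef]; exact if_pos h
        rw [Finset.sum_congr rfl fun u _ => hV1 u]
        rw [Equiv.sum_comp e (fun u' : (x : X) × Fin (a x) =>
          if u'.1 = x then ((a x : ℝ≥0))⁻¹ else 0)]
        rw [← Finset.univ_sigma_univ, Finset.sum_sigma]
        have hin : ∀ x' : X, (∑ _i : Fin (a x'), if x' = x then ((a x : ℝ≥0))⁻¹ else 0)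
            = if x' = x then (a x' : ℝ≥0) * ((a x : ℝ≥0))⁻¹ else 0 := by
          intro x'
          by_cases hxx : x' = x <;>
            simp [hxx, Finset.sum_const, Finset.card_univ, nsmul_eq_mul]
        rw [Finset.sum_congr rfl fun x' _ => hin x']
        rw [Finset.sum_ite_eq' Finset.univ x (fun x' => (a x' : ℝ≥0) * ((a x : ℝ≥0))⁻¹)]
        simp [mul_inv_cancel₀ ha0]
      · have hV1 : ∀ u : Fin K, V x z' u = (K : ℝ≥0)⁻¹ :=
          fun u => by simp only [hVdef]; exact if_neg h
        rw [Finset.sum_congr rfl fun u _ => hV1 u]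
        simp [Finset.card_univ, mul_inv_cancel₀ hK]
    have hmargQ : ∀ x y z', ∑ u : Fin K, Q u x y z' = P x y z' := by
      intro x y z'
      simp only [hQdef]
      rw [← Finset.mul_sum, hVsum, mul_one]
    have hCIQ : ∀ (u : Fin K) (x : X) (y : Y) (z' : Z),
        Q u x y z' * (∑ u' : Fin K, ∑ y', Q u' x y' z') =
        (∑ y', Q u x y' z') * (∑ u' : Fin K, Q u' x y z') := by
      intro u x y z'
      have h1 : (∑ u' : Fin K, ∑ y', Q u' x y' z') = ∑ y', P x y' z' := by
        rw [Finset.sum_comm]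
        exact Finset.sum_congr rfl fun y' _ => hmargQ x y' z'
      rw [h1, hmargQ x y z']
      simp only [hQdef]
      rw [← Finset.sum_mul]
      ring
    have hQT : (∑ u : Fin K, ∑ x, ∑ y', Q u x y' z) = T := by
      rw [Finset.sum_comm]
      refine Finset.sum_congr rfl fun x _ => ?_
      rw [Finset.sum_comm]
      simp only [hmargQ]
    -- pointwise values at z
    have he1 : ∀ u : Fin K, 0 < Px (e u).1 := by
      intro u
      by_contra hc
      have h0 : Px (e u).1 = 0 := le_antisymm (le_of_not_gt hc) (zero_le)
      have h1 : a (e u).1 = 0 := ha_zero _ h0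
      have h2 := (e u).2.pos
      omega
    have hVz : ∀ (x : X) (u : Fin K), 0 < Px x →
        V x z u = (if (e u).1 = x then ((a x:ℝ≥0))⁻¹ else 0) := by
      intro x u hx
      simp [hVdef, hx]
    have hPxle : ∀ x y, P x y z ≤ Px x := fun x y =>
      Finset.single_le_sum (f := fun y' => P x y' z) (fun _ _ => zero_le) (Finset.mem_univ y)
    have hfu : ∀ (u : Fin K) (y : Y),
        (∑ x, Q u x y z) = P (e u).1 y z * ((a (e u).1 : ℝ≥0))⁻¹ := by
      intro u y
      have hoff : ∀ x ∈ Finset.univ, x ≠ (e u).1 → Q u x y z = 0 := by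
        intro x _ hxne
        simp only [hQdef]
        by_cases hx : 0 < Px x
        · rw [hVz x u hx, if_neg (Ne.symm hxne), mul_zero]
        · have h0 : Px x = 0 := le_antisymm (le_of_not_gt hx) (zero_le)
          have hP0 : P x y z = 0 := le_antisymm ((hPxle x y).trans h0.le) (zero_le)
          rw [hP0, zero_mul]
      rw [Finset.sum_eq_single_of_mem (e u).1 (Finset.mem_univ _) hoff]
      simp only [hQdef]
      rw [hVz _ u (he1 u), if_pos rfl]
    have hgu : ∀ u : Fin K, (∑ x, ∑ y, Q u x y z) = Px (e u).1 * ((a (e u).1 : ℝ≥0))⁻¹ := by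
      intro u
      have hxQ : ∀ x : X, (∑ y, Q u x y z) = Px x * V x z u := by
        intro x; simp only [hQdef]; rw [← Finset.sum_mul]
      rw [Finset.sum_congr rfl fun x _ => hxQ x]
      have hoff : ∀ x ∈ Finset.univ, x ≠ (e u).1 → Px x * V x z u = 0 := by
        intro x _ hxne
        by_cases hx : 0 < Px x
        · rw [hVz x u hx, if_neg (Ne.symm hxne), mul_zero]
        · have h0 : Px x = 0 := le_antisymm (le_of_not_gt hx) (zero_le)
          rw [h0, zero_mul]
      rw [Finset.sum_eq_single_of_mem (e u).1 (Finset.mem_univ _) hoff]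
      rw [hVz _ u (he1 u), if_pos rfl]
    -- bounds
    set A : ℝ≥0 := ∑ y, Finset.sup Finset.univ fun u : Fin K => ∑ x, Q u x y z with hA
    set B : ℝ≥0 := Finset.sup Finset.univ fun u : Fin K => ∑ x, ∑ y, Q u x y z with hB
    have hBle : B ≤ ((N:ℝ≥0))⁻¹ := by
      refine Finset.sup_le fun u _ => ?_
      rw [hgu u]
      have hx' := he1 u
      have h1 : ((a (e u).1 : ℝ≥0))⁻¹ ≤ ((N:ℝ≥0) * Px (e u).1)⁻¹ :=
        inv_anti₀ (mul_pos hN0' hx') (ha_le _)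
      calc Px (e u).1 * ((a (e u).1:ℝ≥0))⁻¹
          ≤ Px (e u).1 * ((N:ℝ≥0) * Px (e u).1)⁻¹ := mul_le_mul_right h1 _
        _ = ((N:ℝ≥0))⁻¹ := by
            rw [mul_inv, ← mul_assoc, mul_comm (Px (e u).1) ((N:ℝ≥0))⁻¹, mul_assoc,
              mul_inv_cancel₀ hx'.ne', mul_one]
    set u0 : Fin K := e.symm ⟨x0, ⟨0, ha_pos x0 hx0'⟩⟩ with hu0
    have hBpos : 0 < B := by
      have hane : ((a (e u0).1 : ℝ≥0)) ≠ 0 := by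
        have h := (e u0).2.pos
        exact_mod_cast h.ne'
      refine lt_of_lt_of_le (show (0:ℝ≥0) < ∑ x, ∑ y, Q u0 x y z from ?_)
        (Finset.le_sup (f := fun u : Fin K => ∑ x, ∑ y, Q u x y z) (Finset.mem_univ u0))
      rw [hgu u0]
      exact mul_pos (he1 u0) (pos_iff_ne_zero.mpr (inv_ne_zero hane))
    -- choose the maximizers x_y
    choose xy hxyS hxy using fun y : Y =>
      Finset.exists_mem_eq_sup Sf hSfne (fun x => P x y z / Px x)
    have hxyP : ∀ y, 0 < Px (xy y) := fun y => (hmemSf _).mp (hxyS y)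
    have hfuy : ∀ y : Y, (∑ x, Q (e.symm ⟨xy y, ⟨0, ha_pos _ (hxyP y)⟩⟩) x y z)
        = P (xy y) y z * ((a (xy y) : ℝ≥0))⁻¹ := by
      intro y
      rw [hfu _ y, e.apply_symm_apply]
    have hAge : (∑ y, P (xy y) y z * ((a (xy y) : ℝ≥0))⁻¹) ≤ A := by
      refine Finset.sum_le_sum fun y _ => ?_
      rw [← hfuy y]
      exact Finset.le_sup (f := fun u : Fin K => ∑ x, Q u x y z)
        (Finset.mem_univ (e.symm ⟨xy y, ⟨0, ha_pos _ (hxyP y)⟩⟩))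
    -- real comparisons
    have hBR : (0:ℝ) < (B:ℝ) := by exact_mod_cast hBpos
    have hBRle : (B:ℝ) ≤ ((N:ℝ))⁻¹ := by
      have := hBle
      have h2 : ((B:ℝ)) ≤ (((N:ℝ≥0))⁻¹ : ℝ≥0) := by exact_mod_cast this
      simpa using h2
    have hper : ∀ y : Y, ((P (xy y) y z : ℝ) / (Px (xy y) : ℝ)) *
        (((N:ℝ) * (p0:ℝ)) / ((N:ℝ)*(p0:ℝ)+1))
        ≤ (N:ℝ) * ((P (xy y) y z : ℝ) * (((a (xy y) :ℕ): ℝ))⁻¹) := by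
      intro y
      have hq : (0:ℝ) < (Px (xy y):ℝ) := by exact_mod_cast hxyP y
      have hpq : (p0:ℝ) ≤ (Px (xy y):ℝ) := by exact_mod_cast hp0le _ (hxyS y)
      have hayle : (((a (xy y):ℕ):ℝ)) ≤ (N:ℝ) * (Px (xy y):ℝ) + 1 := by
        have h := (ha_lt (xy y)).le
        have h2 : ((a (xy y) : ℝ≥0) : ℝ) ≤ (((N:ℝ≥0) * Px (xy y) + 1 : ℝ≥0) : ℝ) := by
          exact_mod_cast h
        push_cast at h2
        exact h2
      have haypos : (0:ℝ) < (((a (xy y):ℕ):ℝ)) := by exact_mod_cast ha_pos _ (hxyP y)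
      have hp : (0:ℝ) ≤ (P (xy y) y z : ℝ) := (P (xy y) y z).coe_nonneg
      rw [show (N:ℝ) * ((P (xy y) y z : ℝ) * (((a (xy y) :ℕ): ℝ))⁻¹)
          = ((N:ℝ) * (P (xy y) y z : ℝ)) / (((a (xy y) :ℕ): ℝ)) from by ring]
      rw [div_mul_div_comm, div_le_div_iff₀ (by positivity) (by positivity)]
      nlinarith [mul_le_mul_of_nonneg_left hayle
          (by positivity : (0:ℝ) ≤ (P (xy y) y z : ℝ) * ((N:ℝ) * (p0:ℝ))),
        mul_le_mul_of_nonneg_left hpq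
          (by positivity : (0:ℝ) ≤ (P (xy y) y z : ℝ) * (N:ℝ))]
    have hcy : ∀ y : Y, (c y : ℝ) = (P (xy y) y z : ℝ) / (Px (xy y):ℝ) := by
      intro y
      simp only [hcdef]
      rw [hxy y, NNReal.coe_div]
    have hCR : (C:ℝ) = ∑ y, (P (xy y) y z : ℝ) / (Px (xy y) : ℝ) := by
      rw [hCdef, NNReal.coe_sum]
      exact Finset.sum_congr rfl fun y _ => hcy y
    have hsum1 : (C:ℝ) * (((N:ℝ)*(p0:ℝ))/((N:ℝ)*(p0:ℝ)+1)) ≤ (N:ℝ) * (A:ℝ) := by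
      calc (C:ℝ) * (((N:ℝ)*(p0:ℝ))/((N:ℝ)*(p0:ℝ)+1))
          = ∑ y, ((P (xy y) y z:ℝ)/(Px (xy y):ℝ)) * (((N:ℝ)*(p0:ℝ))/((N:ℝ)*(p0:ℝ)+1)) := by
            rw [hCR, Finset.sum_mul]
        _ ≤ ∑ y, (N:ℝ) * ((P (xy y) y z:ℝ) * (((a (xy y):ℕ):ℝ))⁻¹) :=
            Finset.sum_le_sum fun y _ => hper y
        _ = (N:ℝ) * ∑ y, (P (xy y) y z:ℝ) * (((a (xy y):ℕ):ℝ))⁻¹ := by rw [Finset.mul_sum]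
        _ ≤ (N:ℝ) * (A:ℝ) := by
            refine mul_le_mul_of_nonneg_left ?_ (le_of_lt hN0)
            have h6 : ((∑ y, P (xy y) y z * ((a (xy y) : ℝ≥0))⁻¹ : ℝ≥0) : ℝ) ≤ (A:ℝ) :=
              NNReal.coe_le_coe.mpr hAge
            push_cast at h6
            exact h6
    have hfinal : E < (A:ℝ)/(B:ℝ) := by
      have hA0 : (0:ℝ) ≤ (A:ℝ) := A.coe_nonneg
      have h3 : (A:ℝ)/((N:ℝ))⁻¹ ≤ (A:ℝ)/(B:ℝ) :=
        div_le_div_of_nonneg_left hA0 hBR hBRle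
      rw [show (A:ℝ)/((N:ℝ))⁻¹ = (A:ℝ) * (N:ℝ) from by field_simp] at h3
      calc E < (C:ℝ) * (((N:ℝ)*(p0:ℝ))/((N:ℝ)*(p0:ℝ)+1)) := hkeyN
        _ ≤ (N:ℝ) * (A:ℝ) := hsum1
        _ = (A:ℝ) * (N:ℝ) := mul_comm _ _
        _ ≤ (A:ℝ)/(B:ℝ) := h3
    refine ⟨_, ⟨Fin K, inferInstance, Q, hmargQ, hCIQ, rfl⟩, ?_⟩
    have hne0 : (Finset.sum (Finset.univ : Finset (Fin K)) fun u' => ∑ x, ∑ y', Q u' x y' z) ≠ 0 := by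
      rw [hQT]; exact hT0
    rw [leak_expr_eq (Fin K) inferInstance Q z hne0]
    show w < Real.log ((A:ℝ)/(B:ℝ))
    rw [hEdef] at hfinal
    exact (Real.lt_log_iff_exp_lt (lt_trans (Real.exp_pos w) hfinal)).mpr hfinal
  exact csSup_eq_of_forall_le_of_forall_lt_exists_gt
    (let ⟨r, hr, _⟩ := ach (Real.log (C:ℝ) - 1) (by linarith); ⟨r, hr⟩)
    hub ach
end

section
/- Let X, Y₁, Y₂, Z be finite sets and P a joint pmf on X × Y₁ × Y₂ × Z such that Y₁ and Y₂ are conditionally independent given (X,Z) (the Markov chain Y₁ − (X,Z) − Y₂ holds). Fix z ∈ Z with P_Z(z) > 0 and let S = {x ∈ X : P_{X|Z}(x|z) > 0}. Then ∑_{(y₁,y₂) ∈ Y₁×Y₂} max_{x ∈ S} P_{Y₁,Y₂|X,Z}(y₁,y₂ | x, z) ≤ (∑_{y₁ ∈ Y₁} max_{x ∈ S} P_{Y₁|X,Z}(y₁ | x, z)) · (∑_{y₂ ∈ Y₂} max_{x ∈ S} P_{Y₂|X,Z}(y₂ | x, z)). Equivalently, the pointwise conditional maximal leakage satisfies L(X→(Y₁,Y₂)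 | Z=z) ≤ L(X→Y₁ | Z=z) + L(X→Y₂ | Z=z). -/
open Finset NNReal

/-- Composition lemma for pointwise conditional maximal leakage.
`P` is a joint pmf on `X × Y₁ × Y₂ × Z` with the Markov chain `Y₁ − (X,Z) − Y₂`
(expressed multiplicatively). With `S = {x : P_{X|Z}(x|z) > 0}`,
`∑_{y₁,y₂} max_{x∈S} P_{Y₁,Y₂|X,Z}(y₁,y₂|x,z)
  ≤ (∑_{y₁} max_{x∈S} P_{Y₁|X,Z}(y₁|x,z)) · (∑_{y₂} max_{x∈S} P_{Y₂|X,Z}(y₂|x,z))`,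
i.e. `L(X→(Y₁,Y₂)|Z=z) ≤ L(X→Y₁|Z=z) + L(X→Y₂|Z=z)`. -/
theorem stmt2 {X Y1 Y2 Z : Type*} [Fintype X] [Fintype Y1] [Fintype Y2] [Fintype Z]
    (P : X → Y1 → Y2 → Z → ℝ≥0)
    (hsum : ∑ x, ∑ y1, ∑ y2, ∑ z, P x y1 y2 z = 1)
    (hMarkov : ∀ x y1 y2 z,
      P x y1 y2 z * (∑ y1', ∑ y2', P x y1' y2' z) =
        (∑ y2', P x y1 y2' z) * (∑ y1', P x y1' y2 z))
    (z : Z)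
    (hz : 0 < ∑ x, ∑ y1, ∑ y2, P x y1 y2 z) :
    ∑ y1, ∑ y2, ((Finset.univ.filter fun x =>
        0 < (∑ y1', ∑ y2', P x y1' y2' z) /
          (∑ x', ∑ y1', ∑ y2', P x' y1' y2' z)).sup
      fun x => P x y1 y2 z / (∑ y1', ∑ y2', P x y1' y2' z)) ≤
    (∑ y1, ((Finset.univ.filter fun x =>
        0 < (∑ y1', ∑ y2', P x y1' y2' z) /
          (∑ x', ∑ y1', ∑ y2', P x' y1' y2' z)).sup
      fun x => (∑ y2', P x y1 y2' z) / (∑ y1', ∑ y2', P x y1' y2' z))) *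
    (∑ y2, ((Finset.univ.filter fun x =>
        0 < (∑ y1', ∑ y2', P x y1' y2' z) /
          (∑ x', ∑ y1', ∑ y2', P x' y1' y2' z)).sup
      fun x => (∑ y1', P x y1' y2 z) / (∑ y1', ∑ y2', P x y1' y2' z))) := by

  set S := (Finset.univ.filter fun x =>
      0 < (∑ y1', ∑ y2', P x y1' y2' z) /
        (∑ x', ∑ y1', ∑ y2', P x' y1' y2' z)) with hS
  have key : ∀ y1 y2, (S.sup fun x => P x y1 y2 z / (∑ y1', ∑ y2', P x y1' y2' z)) ≤
      (S.sup fun x => (∑ y2', P x y1 y2' z) / (∑ y1', ∑ y2', P x y1' y2' z)) *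
      (S.sup fun x => (∑ y1', P x y1' y2 z) / (∑ y1', ∑ y2', P x y1' y2' z)) := by
    intro y1 y2
    apply Finset.sup_le
    intro x hx
    have hD : 0 < ∑ y1', ∑ y2', P x y1' y2' z := by
      simp only [hS, Finset.mem_filter] at hx
      rcases hx with ⟨-, h⟩
      by_contra hc
      push_neg at hc
      have : (∑ y1', ∑ y2', P x y1' y2' z) = 0 := le_antisymm hc zero_le
      rw [this] at h
      simp at h
    have hM := hMarkov x y1 y2 z
    have heq : P x y1 y2 z / (∑ y1', ∑ y2', P x y1' y2' z) =
        ((∑ y2', P x y1 y2' z) / (∑ y1', ∑ y2', P x y1' y2' z)) *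
        ((∑ y1', P x y1' y2 z) / (∑ y1', ∑ y2', P x y1' y2' z)) := by
      rw [div_mul_div_comm, ← hM, mul_comm (P x y1 y2 z)]
      rw [mul_div_mul_left _ _ hD.ne']
    rw [heq]
    exact mul_le_mul'
      (Finset.le_sup (f := fun x => (∑ y2', P x y1 y2' z) / (∑ y1', ∑ y2', P x y1' y2' z)) hx)
      (Finset.le_sup (f := fun x => (∑ y1', P x y1' y2 z) / (∑ y1', ∑ y2', P x y1' y2' z)) hx)
  calc ∑ y1, ∑ y2, (S.sup fun x => P x y1 y2 z / (∑ y1', ∑ y2', P x y1' y2' z))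
      ≤ ∑ y1, ∑ y2, (S.sup fun x => (∑ y2', P x y1 y2' z) / (∑ y1', ∑ y2', P x y1' y2' z)) *
        (S.sup fun x => (∑ y1', P x y1' y2 z) / (∑ y1', ∑ y2', P x y1' y2' z)) := by
        exact Finset.sum_le_sum fun y1 _ => Finset.sum_le_sum fun y2 _ => key y1 y2
    _ = _ := by rw [Finset.sum_mul_sum]
end

section
/- Let X, Z, Y₁, Y₂ be finite sets and P a joint pmf on X × Z × Y₁ × Y₂ such that Y₂ is conditionally independent of (X,Z) given Y₁ (the Markov chain (X,Z) − Y₁ − Y₂ holds). Fix z ∈ Z with P_Z(z) > 0 and let S = {x ∈ X : P_{X|Z}(x|z) > 0}. Then ∑_{y₂ ∈ Y₂} max_{x ∈ S} P_{Y₂|X,Z}(y₂ | x, z) ≤ ∑_{y₁ ∈ Y₁} max_{x ∈ S} P_{Y₁|X,Z}(y₁ | x, z); that is, L(X→Y₂ | Z=z) ≤ L(X→Y₁ | Z=z). -/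
open Finset NNReal

/-- First half of the data-processing inequality for pointwise
conditional maximal leakage. `P` is a joint pmf on `X × Z × Y₁ × Y₂` with the
Markov chain `(X,Z) − Y₁ − Y₂` (expressed multiplicatively:
`P_{X,Z,Y₁,Y₂}(x,z,y₁,y₂) · P_{Y₁}(y₁) = P_{X,Z,Y₁}(x,z,y₁) · P_{Y₁,Y₂}(y₁,y₂)`).
With `S = {x : P_{X|Z}(x|z) > 0}`,
`∑_{y₂} max_{x∈S} P_{Y₂|X,Z}(y₂|x,z) ≤ ∑_{y₁} max_{x∈S} P_{Y₁|X,Z}(y₁|x,z)`,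
i.e. `L(X→Y₂|Z=z) ≤ L(X→Y₁|Z=z)`. -/
theorem stmt3 {X Z Y1 Y2 : Type*} [Fintype X] [Fintype Z] [Fintype Y1] [Fintype Y2]
    (P : X → Z → Y1 → Y2 → ℝ≥0)
    (hsum : ∑ x, ∑ z, ∑ y1, ∑ y2, P x z y1 y2 = 1)
    (hMarkov : ∀ x z y1 y2,
      P x z y1 y2 * (∑ x', ∑ z', ∑ y2', P x' z' y1 y2') =
        (∑ y2', P x z y1 y2') * (∑ x', ∑ z', P x' z' y1 y2))
    (z : Z)
    (hz : 0 < ∑ x, ∑ y1, ∑ y2, P x z y1 y2) :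
    ∑ y2, ((Finset.univ.filter fun x =>
        0 < (∑ y1', ∑ y2', P x z y1' y2') /
          (∑ x', ∑ y1', ∑ y2', P x' z y1' y2')).sup
      fun x => (∑ y1', P x z y1' y2) / (∑ y1', ∑ y2', P x z y1' y2')) ≤
    ∑ y1, ((Finset.univ.filter fun x =>
        0 < (∑ y1', ∑ y2', P x z y1' y2') /
          (∑ x', ∑ y1', ∑ y2', P x' z y1' y2')).sup
      fun x => (∑ y2', P x z y1 y2') / (∑ y1', ∑ y2', P x z y1' y2')) := by
  classical
  set A : X → ℝ≥0 := fun x => ∑ y1', ∑ y2', P x z y1' y2' with hA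
  set B : X → Y1 → ℝ≥0 := fun x y1 => ∑ y2', P x z y1 y2' with hB
  set N : Y1 → ℝ≥0 := fun y1 => ∑ x', ∑ z', ∑ y2', P x' z' y1 y2' with hN
  set M : Y1 → Y2 → ℝ≥0 := fun y1 y2 => ∑ x', ∑ z', P x' z' y1 y2 with hM
  set W : Y1 → Y2 → ℝ≥0 := fun y1 y2 => M y1 y2 / N y1 with hW
  set S : Finset X := Finset.univ.filter fun x =>
      0 < A x / (∑ x', ∑ y1', ∑ y2', P x' z y1' y2') with hS
  -- key pointwise identity P x z y1 y2 = B x y1 * W y1 y2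
  have key : ∀ x y1 y2, P x z y1 y2 = B x y1 * W y1 y2 := by
    intro x y1 y2
    by_cases h : N y1 = 0
    · have hle : P x z y1 y2 ≤ N y1 := by
        calc P x z y1 y2 ≤ ∑ y2', P x z y1 y2' :=
              Finset.single_le_sum (fun _ _ => zero_le) (Finset.mem_univ _)
          _ ≤ ∑ z', ∑ y2', P x z' y1 y2' :=
              Finset.single_le_sum (f := fun z' => ∑ y2', P x z' y1 y2')
                (fun _ _ => zero_le) (Finset.mem_univ _)
          _ ≤ N y1 :=
              Finset.single_le_sum (f := fun x' => ∑ z', ∑ y2', P x' z' y1 y2')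
                (fun _ _ => zero_le) (Finset.mem_univ _)
      have h0 : P x z y1 y2 = 0 := le_antisymm (h ▸ hle) zero_le
      simp [h0, hW, h]
    · have hm := hMarkov x z y1 y2
      rw [hW, mul_div_assoc'] 
      rw [eq_div_iff h]
      exact hm
  -- the right-hand side summand as a function
  set g : Y1 → ℝ≥0 := fun y1 => S.sup fun x => B x y1 / A x with hg
  have step1 : ∀ y2, (S.sup fun x => (∑ y1', P x z y1' y2) / A x)
      ≤ ∑ y1, g y1 * W y1 y2 := by
    intro y2
    refine Finset.sup_le fun x hx => ?_
    have hrw : (∑ y1', P x z y1' y2) / A x = ∑ y1, (B x y1 / A x) * W y1 y2 := by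
      rw [div_eq_mul_inv, Finset.sum_mul]
      refine Finset.sum_congr rfl fun y1 _ => ?_
      rw [key x y1 y2, div_eq_mul_inv]
      ring
    rw [hrw]
    refine Finset.sum_le_sum fun y1 _ => ?_
    exact mul_le_mul_left (Finset.le_sup (f := fun x => B x y1 / A x) hx) _
  have step2 : ∀ y1, ∑ y2, W y1 y2 ≤ 1 := by
    intro y1
    by_cases h : N y1 = 0
    · simp [hW, h]
    · have hsumM : ∑ y2, M y1 y2 = N y1 := by
        rw [hM, hN]
        rw [Finset.sum_comm]
        refine Finset.sum_congr rfl fun x' _ => Finset.sum_comm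
      have : ∑ y2, W y1 y2 = (∑ y2, M y1 y2) / N y1 := by
        simp [hW, div_eq_mul_inv, Finset.sum_mul]
      rw [this, hsumM, div_self h]
  calc ∑ y2, (S.sup fun x => (∑ y1', P x z y1' y2) / A x)
      ≤ ∑ y2, ∑ y1, g y1 * W y1 y2 := Finset.sum_le_sum fun y2 _ => step1 y2
    _ = ∑ y1, g y1 * ∑ y2, W y1 y2 := by
        rw [Finset.sum_comm]
        exact Finset.sum_congr rfl fun y1 _ => (Finset.mul_sum _ _ _).symm
    _ ≤ ∑ y1, g y1 * 1 := Finset.sum_le_sum fun y1 _ => mul_le_mul_right (step2 y1) _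
    _ = ∑ y1, g y1 := by simp
end

section
/- Let X, Z, Y₁, Y₂ be finite sets and P a joint pmf on X × Z × Y₁ × Y₂ such that Y₂ is conditionally independent of (X,Z) given Y₁ (the Markov chain (X,Z) − Y₁ − Y₂ holds). Fix z ∈ Z with P_Z(z) > 0, let S = {x ∈ X : P_{X|Z}(x|z) > 0} and T = {y₁ ∈ Y₁ : P_{Y₁|Z}(y₁|z) > 0}. Then ∑_{y₂ ∈ Y₂} max_{x ∈ S} P_{Y₂|X,Z}(y₂ | x, z) ≤ ∑_{y₂ ∈ Y₂} max_{y₁ ∈ T} P_{Y₂|Y₁}(y₂ | y₁); that is, L(X→Y₂ | Z=z) ≤ L(Y₁→Y₂ | Z=z). -/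
open Finset NNReal

/-- Second half of the data-processing inequality for pointwise
conditional maximal leakage. `P` is a joint pmf on `X × Z × Y₁ × Y₂` with the
Markov chain `(X,Z) − Y₁ − Y₂` (expressed multiplicatively).
With `S = {x : P_{X|Z}(x|z) > 0}` and `T = {y₁ : P_{Y₁|Z}(y₁|z) > 0}`,
`∑_{y₂} max_{x∈S} P_{Y₂|X,Z}(y₂|x,z) ≤ ∑_{y₂} max_{y₁∈T} P_{Y₂|Y₁}(y₂|y₁)`,
i.e. `L(X→Y₂|Z=z) ≤ L(Y₁→Y₂|Z=z)`. -/
theorem stmt4 {X Z Y1 Y2 : Type*} [Fintype X] [Fintype Z] [Fintype Y1] [Fintype Y2]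
    (P : X → Z → Y1 → Y2 → ℝ≥0)
    (hsum : ∑ x, ∑ z, ∑ y1, ∑ y2, P x z y1 y2 = 1)
    (hMarkov : ∀ x z y1 y2,
      P x z y1 y2 * (∑ x', ∑ z', ∑ y2', P x' z' y1 y2') =
        (∑ y2', P x z y1 y2') * (∑ x', ∑ z', P x' z' y1 y2))
    (z : Z)
    (hz : 0 < ∑ x, ∑ y1, ∑ y2, P x z y1 y2) :
    ∑ y2, ((Finset.univ.filter fun x =>
        0 < (∑ y1', ∑ y2', P x z y1' y2') /
          (∑ x', ∑ y1', ∑ y2', P x' z y1' y2')).sup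
      fun x => (∑ y1', P x z y1' y2) / (∑ y1', ∑ y2', P x z y1' y2')) ≤
    ∑ y2, ((Finset.univ.filter fun y1 =>
        0 < (∑ x', ∑ y2', P x' z y1 y2') /
          (∑ x', ∑ y1', ∑ y2', P x' z y1' y2')).sup
      fun y1 => (∑ x', ∑ z', P x' z' y1 y2) /
        (∑ x', ∑ z', ∑ y2', P x' z' y1 y2')) := by
  apply Finset.sum_le_sum
  intro y2 _
  set M := (Finset.univ.filter fun y1 =>
        0 < (∑ x', ∑ y2', P x' z y1 y2') /
          (∑ x', ∑ y1', ∑ y2', P x' z y1' y2')).sup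
      (fun y1 => (∑ x', ∑ z', P x' z' y1 y2) /
        (∑ x', ∑ z', ∑ y2', P x' z' y1 y2')) with hM
  apply Finset.sup_le
  intro x hx
  rw [Finset.mem_filter] at hx
  have hPxz : 0 < ∑ y1', ∑ y2', P x z y1' y2' := by
    rw [pos_iff_ne_zero]
    intro h
    rw [h, zero_div] at hx
    exact lt_irrefl 0 hx.2
  rw [div_le_iff₀ hPxz, Finset.mul_sum]
  apply Finset.sum_le_sum
  intro y1 _
  rcases eq_zero_or_pos (P x z y1 y2) with h0 | hp
  · rw [h0]; exact zero_le
  have hA : 0 < ∑ x', ∑ z', ∑ y2', P x' z' y1 y2' := by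
    refine lt_of_lt_of_le hp ?_
    calc P x z y1 y2 ≤ ∑ y2', P x z y1 y2' :=
          Finset.single_le_sum (f := fun y2' => P x z y1 y2') (fun _ _ => zero_le) (Finset.mem_univ _)
      _ ≤ ∑ z', ∑ y2', P x z' y1 y2' :=
          Finset.single_le_sum (f := fun z' => ∑ y2', P x z' y1 y2') (fun _ _ => zero_le) (Finset.mem_univ _)
      _ ≤ ∑ x', ∑ z', ∑ y2', P x' z' y1 y2' :=
          Finset.single_le_sum (f := fun x' => ∑ z', ∑ y2', P x' z' y1 y2') (fun _ _ => zero_le) (Finset.mem_univ _)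
  have hT : y1 ∈ Finset.univ.filter fun y1 =>
      0 < (∑ x', ∑ y2', P x' z y1 y2') /
        (∑ x', ∑ y1', ∑ y2', P x' z y1' y2') := by
    rw [Finset.mem_filter]
    refine ⟨Finset.mem_univ _, div_pos ?_ hz⟩
    refine lt_of_lt_of_le hp ?_
    calc P x z y1 y2 ≤ ∑ y2', P x z y1 y2' :=
          Finset.single_le_sum (f := fun y2' => P x z y1 y2') (fun _ _ => zero_le) (Finset.mem_univ _)
      _ ≤ ∑ x', ∑ y2', P x' z y1 y2' :=
          Finset.single_le_sum (f := fun x' => ∑ y2', P x' z y1 y2') (fun _ _ => zero_le) (Finset.mem_univ _)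
  have hCM : (∑ x', ∑ z', P x' z' y1 y2) /
      (∑ x', ∑ z', ∑ y2', P x' z' y1 y2') ≤ M :=
    Finset.le_sup (f := fun y1 => (∑ x', ∑ z', P x' z' y1 y2) /
      (∑ x', ∑ z', ∑ y2', P x' z' y1 y2')) hT
  have hkey : P x z y1 y2 = (∑ y2', P x z y1 y2') *
      ((∑ x', ∑ z', P x' z' y1 y2) / (∑ x', ∑ z', ∑ y2', P x' z' y1 y2')) := by
    rw [mul_div_assoc', eq_div_iff hA.ne']
    exact hMarkov x z y1 y2
  rw [hkey, mul_comm M]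
  exact mul_le_mul_right hCM _
end

section
/- Let g : ℝ → ℝ be a log-concave probability density function with CDF G(t) = ∫_{−∞}^{t} g(s) ds, let m ≥ 2 be an integer, and define f(v) = ∑_{j=1}^m ∫_ℝ (∏_{l ≠ j} G(v_j − v_l + t + 1)) g(t) dt for v ∈ ℝ_{≥0}^m. Then for every S ≥ 0 and every v ∈ ℝ_{≥0}^m with ∑_{i=1}^m v_i = S, one has f(v) ≤ f((S/m, S/m, …, S/m)); i.e., on the simplex of fixed total vote count, f is maximized by the uniform histogram. -/
open MeasureTheory Finset

/-- A nonnegative function is log-concave iff `g(x)^a · g(y)^b ≤ g(ax + by)`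
for all convex combinations; this is the standard multiplicative reformulation of
concavity of `log ∘ g` (with the convention `log 0 = −∞`). Powers are `Real.rpow`. -/
def LogConcave (g : ℝ → ℝ) : Prop :=
  ∀ x y a b : ℝ, 0 ≤ a → 0 ≤ b → a + b = 1 →
    g x ^ a * g y ^ b ≤ g (a * x + b * y)

/-- The CDF `G(t) = ∫_{−∞}^{t} g(s) ds` of a density `g`. -/
noncomputable def cdfOf (g : ℝ → ℝ) (t : ℝ) : ℝ := ∫ s in Set.Iic t, g s

/-- `f(v) = ∑_{j=1}^m ∫_ℝ (∏_{l ≠ j} G(v_j − v_l + t + 1)) g(t) dt`, the exponential of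
the entrywise information leakage of the Report-Noisy-Max mechanism with noise
density `g`, given the histogram `v` of known votes. -/
noncomputable def pateF (m : ℕ) (g : ℝ → ℝ) (v : Fin m → ℝ) : ℝ :=
  ∑ j : Fin m, ∫ t : ℝ,
    (∏ l ∈ Finset.univ.erase j, cdfOf g (v j - v l + t + 1)) * g t

namespace Stmt7Aux

variable {g : ℝ → ℝ}

/-- Two-point inequality for log-concave functions: nested pairs with equal sum. -/
lemma two_point (hg0 : ∀ t, 0 ≤ g t) (hlc : LogConcave g)
    {x x' y' y : ℝ} (h1 : x ≤ x') (h2 : x' ≤ y') (h3 : y' ≤ y) (hsum : x + y = x' + y') :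
    g x * g y ≤ g x' * g y' := by
  rcases eq_or_lt_of_le h1 with h | hxx'
  · have hy : y = y' := by linarith
    rw [← h, hy]
  · have hxy : x < y := by linarith
    by_cases hx0 : g x = 0
    · rw [hx0, zero_mul]; exact mul_nonneg (hg0 _) (hg0 _)
    by_cases hy0 : g y = 0
    · rw [hy0, mul_zero]; exact mul_nonneg (hg0 _) (hg0 _)
    have hxpos : 0 < g x := lt_of_le_of_ne (hg0 x) (Ne.symm hx0)
    have hypos : 0 < g y := lt_of_le_of_ne (hg0 y) (Ne.symm hy0)
    have hyx : (0:ℝ) < y - x := by linarith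
    have hne : y - x ≠ 0 := ne_of_gt hyx
    set a : ℝ := (y - y') / (y - x) with ha_def
    set b : ℝ := (y' - x) / (y - x) with hb_def
    have ha : 0 ≤ a := div_nonneg (by linarith) hyx.le
    have hb : 0 ≤ b := div_nonneg (by linarith) hyx.le
    have hab : a + b = 1 := by rw [ha_def, hb_def]; field_simp; ring
    have e1 : a * x + b * y = y' := by rw [ha_def, hb_def]; field_simp; ring
    have e2 : a * y + b * x = x' := by
      have hx' : x' = x + y - y' := by linarith
      rw [ha_def, hb_def, hx']; field_simp; ring
    have k1 := hlc x y a b ha hb hab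
    have k2 := hlc y x a b ha hb hab
    rw [e1] at k1
    rw [e2] at k2
    have key : g x * g y = (g y ^ a * g x ^ b) * (g x ^ a * g y ^ b) := by
      rw [show (g y ^ a * g x ^ b) * (g x ^ a * g y ^ b)
            = (g x ^ a * g x ^ b) * (g y ^ a * g y ^ b) by ring,
          ← Real.rpow_add hxpos, ← Real.rpow_add hypos, hab, Real.rpow_one, Real.rpow_one]
    rw [key]
    exact mul_le_mul k2 k1
      (mul_nonneg (Real.rpow_nonneg (hg0 x) a) (Real.rpow_nonneg (hg0 y) b)) (hg0 x')

/-- The basic exchange inequality. -/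
lemma swap_ineq (hg0 : ∀ t, 0 ≤ g t) (hlc : LogConcave g)
    {w : ℝ} (hw : 0 ≤ w) (t : ℝ) :
    g (w + t + 1) * g t ≤ g (t + 1) * g (t + w) := by
  rw [show w + t + 1 = t + w + 1 by ring, mul_comm (g (t + w + 1)) (g t)]
  rcases le_total w 1 with h | h
  · have := two_point hg0 hlc (x := t) (x' := t + w) (y' := t + 1) (y := t + w + 1)
      (by linarith) (by linarith) (by linarith) (by ring)
    calc g t * g (t + w + 1) ≤ g (t + w) * g (t + 1) := this
      _ = g (t + 1) * g (t + w) := by ring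
  · exact two_point hg0 hlc (x := t) (x' := t + 1) (y' := t + w) (y := t + w + 1)
      (by linarith) (by linarith) (by linarith) (by ring)

lemma cdf_nonneg (hg0 : ∀ t, 0 ≤ g t) (t : ℝ) : 0 ≤ cdfOf g t :=
  setIntegral_nonneg measurableSet_Iic fun x _ => hg0 x

lemma cdf_le_one (hg0 : ∀ t, 0 ≤ g t) (hgi : Integrable g)
    (hg1 : ∫ t : ℝ, g t = 1) (t : ℝ) : cdfOf g t ≤ 1 := by
  rw [← hg1]
  exact setIntegral_le_integral hgi (Filter.Eventually.of_forall hg0)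

lemma cdf_mono (hg0 : ∀ t, 0 ≤ g t) (hgi : Integrable g) : Monotone (cdfOf g) :=
  fun x y hxy => setIntegral_mono_set hgi.integrableOn
    (Filter.Eventually.of_forall hg0)
    (HasSubset.Subset.eventuallyLE (Set.Iic_subset_Iic.2 hxy))

lemma cdf_lip (hg0 : ∀ t, 0 ≤ g t) (hgi : Integrable g)
    {Cb : ℝ} (hgC : ∀ x, g x ≤ Cb) (x y : ℝ) :
    |cdfOf g x - cdfOf g y| ≤ Cb * |x - y| := by
  have key : ∀ p q : ℝ, p ≤ q → cdfOf g q - cdfOf g p ≤ Cb * (q - p) := by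
    intro p q hpq
    rw [show cdfOf g q - cdfOf g p
        = ((∫ s in Set.Iic q, g s) - ∫ s in Set.Iic p, g s) from rfl,
      intervalIntegral.integral_Iic_sub_Iic hgi.integrableOn hgi.integrableOn]
    calc (∫ s in p..q, g s) ≤ ∫ _s in p..q, Cb :=
          intervalIntegral.integral_mono_on hpq hgi.intervalIntegrable
            intervalIntegrable_const fun s _ => hgC s
      _ = Cb * (q - p) := by rw [intervalIntegral.integral_const, smul_eq_mul]; ring
  rcases le_total x y with h | h
  · have h2 : cdfOf g x ≤ cdfOf g y := cdf_mono hg0 hgi h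
    rw [abs_of_nonpos (sub_nonpos.2 h2), abs_of_nonpos (sub_nonpos.2 h)]
    have := key x y h
    linarith
  · have h2 : cdfOf g y ≤ cdfOf g x := cdf_mono hg0 hgi h
    rw [abs_of_nonneg (sub_nonneg.2 h2), abs_of_nonneg (sub_nonneg.2 h)]
    have := key y x h
    linarith

/-- A log-concave integrable density is bounded. -/
lemma exists_bound (hg0 : ∀ t, 0 ≤ g t) (hgi : Integrable g)
    (hg1 : ∫ t : ℝ, g t = 1) (hlc : LogConcave g) :
    ∃ Cb : ℝ, 1 ≤ Cb ∧ ∀ x, g x ≤ Cb := by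
  -- there exist two distinct points with positive density
  have hpr : ∃ p r : ℝ, p < r ∧ 0 < g p ∧ 0 < g r := by
    by_contra h
    push_neg at h
    have hsub : Set.Subsingleton {x : ℝ | 0 < g x} := by
      intro p hp r hr
      by_contra hne
      rcases lt_or_gt_of_ne hne with hlt | hlt
      · exact absurd hr (not_lt.2 (h p r hlt hp))
      · exact absurd hp (not_lt.2 (h r p hlt hr))
    have h0 : volume {x : ℝ | 0 < g x} = 0 :=
      Set.Countable.measure_zero hsub.countable _
    have hz : ∀ᵐ x : ℝ, g x = 0 := by
      rw [ae_iff]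
      refine measure_mono_null (fun x hx => ?_) h0
      exact lt_of_le_of_ne (hg0 x) (Ne.symm hx)
    have := integral_eq_zero_of_ae hz
    rw [hg1] at this
    norm_num at this
  obtain ⟨p, r, hpr, hgp, hgr⟩ := hpr
  set m0 : ℝ := min (min (g p) (g r)) 1 with hm0
  have hm0pos : 0 < m0 := lt_min (lt_min hgp hgr) one_pos
  set L : ℝ := (r - p) / 2 with hL_def
  have hL : 0 < L := by rw [hL_def]; linarith
  -- anchored estimate
  have anchor : ∀ a x : ℝ, 0 < g a → a ≠ x → 1 ≤ g x →
      min (g a) 1 * g x ^ (2⁻¹ : ℝ) * (|x - a| / 2) ≤ 1 := by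
    intro a x hga hax hM
    set J : Set ℝ := Set.uIcc ((a + x) / 2) x with hJ
    have hxa : x - a ≠ 0 := sub_ne_zero.2 (Ne.symm hax)
    have key : ∀ y ∈ J, min (g a) 1 * g x ^ (2⁻¹ : ℝ) ≤ g y := by
      intro y hy
      set lam : ℝ := (y - a) / (x - a) with hlam
      have hb1 : 2⁻¹ ≤ lam ∧ lam ≤ 1 := by
        rcases hax.lt_or_gt with hlt | hlt
        · have hmid : (a + x) / 2 ≤ x := by linarith
          rw [hJ, Set.uIcc_of_le hmid] at hy
          obtain ⟨hy1, hy2⟩ := hy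
          have hpos : (0:ℝ) < x - a := by linarith
          constructor
          · rw [hlam, le_div_iff₀ hpos]; linarith
          · rw [hlam, div_le_one hpos]; linarith
        · have hmid : x ≤ (a + x) / 2 := by linarith
          rw [hJ, Set.uIcc_of_ge hmid] at hy
          obtain ⟨hy1, hy2⟩ := hy
          have hneg : x - a < 0 := by linarith
          constructor
          · rw [hlam, le_div_iff_of_neg hneg]; linarith
          · rw [hlam, div_le_one_of_neg hneg]; linarith
      obtain ⟨hl1, hl2⟩ := hb1
      have hcomb : (1 - lam) * a + lam * x = y := by
        have : lam * (x - a) = y - a := by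
          rw [hlam, div_mul_cancel₀ _ hxa]
        nlinarith [this]
      have hlc' := hlc a x (1 - lam) lam (by linarith) (by linarith) (by ring)
      rw [hcomb] at hlc'
      refine le_trans ?_ hlc'
      have f1 : min (g a) 1 ≤ g a ^ (1 - lam) := by
        have hmpos : 0 < min (g a) 1 := lt_min hga one_pos
        have s1 : min (g a) 1 ≤ (min (g a) 1) ^ (1 - lam) := by
          conv_lhs => rw [← Real.rpow_one (min (g a) 1)]
          exact Real.rpow_le_rpow_of_exponent_ge hmpos (min_le_right _ _) (by linarith)
        refine s1.trans (Real.rpow_le_rpow hmpos.le (min_le_left _ _) (by linarith))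
      have f2 : g x ^ (2⁻¹ : ℝ) ≤ g x ^ lam :=
        Real.rpow_le_rpow_of_exponent_le hM hl1
      exact mul_le_mul f1 f2 (Real.rpow_nonneg (le_trans zero_le_one hM) _)
        (Real.rpow_nonneg (hg0 a) _)
    have hJm : MeasurableSet J := measurableSet_uIcc
    have hvol : volume J = ENNReal.ofReal (|x - a| / 2) := by
      rw [hJ, Real.volume_interval]
      congr 1
      rw [show x - (a + x) / 2 = (x - a) / 2 by ring, abs_div]
      norm_num
    have hvolne : volume J ≠ ⊤ := by rw [hvol]; exact ENNReal.ofReal_ne_top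
    have hint : min (g a) 1 * g x ^ (2⁻¹ : ℝ) * (volume J).toReal ≤ ∫ y in J, g y :=
      by have := setIntegral_ge_of_const_le_real hJm hvolne key hgi.integrableOn
         rw [measureReal_def] at this
         exact this
    have hle1 : (∫ y in J, g y) ≤ 1 := by
      rw [← hg1]
      exact setIntegral_le_integral hgi (Filter.Eventually.of_forall hg0)
    have htr : (volume J).toReal = |x - a| / 2 := by
      rw [hvol, ENNReal.toReal_ofReal (by positivity)]
    rw [htr] at hint
    linarith
  refine ⟨max 1 ((2 / (L * m0)) ^ 2), le_max_left _ _, ?_⟩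
  intro x
  rcases le_or_gt (g x) 1 with h1 | hM
  · exact h1.trans (le_max_left _ _)
  have hM' : 1 ≤ g x := hM.le
  -- choose anchor
  obtain ⟨a, hga, hgam, haL, hax⟩ :
      ∃ a : ℝ, 0 < g a ∧ min (g p) (g r) ≤ g a ∧ L ≤ |x - a| ∧ a ≠ x := by
    rcases le_or_gt x ((p + r) / 2) with hx | hx
    · have hxr : x < r := lt_of_le_of_lt hx (by linarith)
      refine ⟨r, hgr, min_le_right _ _, ?_, ne_of_gt hxr⟩
      rw [abs_sub_comm, abs_of_nonneg (by linarith : (0:ℝ) ≤ r - x), hL_def]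
      linarith
    · have hpx : p < x := by linarith
      refine ⟨p, hgp, min_le_left _ _, ?_, ne_of_lt hpx⟩
      rw [abs_of_nonneg (by linarith : (0:ℝ) ≤ x - p), hL_def]
      linarith
  have hanc := anchor a x hga hax hM'
  have hm0a : m0 ≤ min (g a) 1 := by
    rw [hm0]
    exact min_le_min hgam (le_refl 1)
  set X : ℝ := g x ^ (2⁻¹ : ℝ) with hX
  have hX0 : 0 ≤ X := Real.rpow_nonneg (hg0 x) _
  have hmin0 : 0 ≤ min (g a) 1 := le_min hga.le zero_le_one
  have step1 : m0 * X * (L / 2) ≤ 1 := by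
    calc m0 * X * (L / 2) ≤ min (g a) 1 * X * (L / 2) :=
          mul_le_mul_of_nonneg_right (mul_le_mul_of_nonneg_right hm0a hX0) (by positivity)
      _ ≤ min (g a) 1 * X * (|x - a| / 2) :=
          mul_le_mul_of_nonneg_left (by linarith) (mul_nonneg hmin0 hX0)
      _ ≤ 1 := hanc
  have step2 : X * (L * m0) ≤ 2 := by nlinarith
  have step3 : X ≤ 2 / (L * m0) := (le_div_iff₀ (by positivity)).2 step2
  have hgx : g x = X * X := by
    rw [hX, ← Real.rpow_add (by linarith : (0:ℝ) < g x) (2⁻¹) (2⁻¹)]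
    norm_num
  rw [hgx]
  refine le_trans ?_ (le_max_right _ _)
  rw [pow_two]
  exact mul_le_mul step3 step3 hX0 (by positivity)

/-- Almost everywhere continuity of a log-concave density. -/
lemma ae_continuous (hg0 : ∀ t, 0 ≤ g t) (hlc : LogConcave g) :
    ∀ᵐ x : ℝ, ContinuousAt g x := by
  set I : Set ℝ := {x | 0 < g x} with hI
  have hIc : Convex ℝ I := by
    intro x hx y hy a b ha hb hab
    have h := hlc x y a b ha hb hab
    show 0 < g (a • x + b • y)
    have hpos : 0 < g x ^ a * g y ^ b :=
      mul_pos (Real.rpow_pos_of_pos hx a) (Real.rpow_pos_of_pos hy b)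
    calc (0:ℝ) < g x ^ a * g y ^ b := hpos
      _ ≤ g (a * x + b * y) := h
      _ = g (a • x + b • y) := by rw [smul_eq_mul, smul_eq_mul]
  have hfr : volume (frontier I) = 0 := hIc.addHaar_frontier volume
  rw [ae_iff]
  refine measure_mono_null (fun x hx => ?_) hfr
  by_contra hxf
  apply hx
  have hmem : x ∈ interior I ∨ x ∉ closure I := by
    by_contra hcon
    push_neg at hcon
    exact hxf ⟨hcon.2, hcon.1⟩
  rcases hmem with hxi | hxo
  · have hsub : interior I ⊆ I := interior_subset
    have hcc : ConcaveOn ℝ (interior I) (fun y => Real.log (g y)) := by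
      refine ⟨hIc.interior, ?_⟩
      intro p hp q hq a b ha hb hab
      have hgp : 0 < g p := hsub hp
      have hgq : 0 < g q := hsub hq
      have h := hlc p q a b ha hb hab
      have hpos : 0 < g p ^ a * g q ^ b :=
        mul_pos (Real.rpow_pos_of_pos hgp a) (Real.rpow_pos_of_pos hgq b)
      have e : a • Real.log (g p) + b • Real.log (g q)
          = Real.log (g p ^ a * g q ^ b) := by
        rw [Real.log_mul (ne_of_gt (Real.rpow_pos_of_pos hgp a))
          (ne_of_gt (Real.rpow_pos_of_pos hgq b)),
          Real.log_rpow hgp, Real.log_rpow hgq, smul_eq_mul, smul_eq_mul]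
      rw [e]
      refine Real.log_le_log hpos ?_
      calc g p ^ a * g q ^ b ≤ g (a * p + b * q) := h
        _ = g (a • p + b • q) := by rw [smul_eq_mul, smul_eq_mul]
    have hca : ContinuousAt (fun y => Real.log (g y)) x :=
      (hcc.continuousOn isOpen_interior).continuousAt (isOpen_interior.mem_nhds hxi)
    have hce : ContinuousAt (fun y => Real.exp (Real.log (g y))) x :=
      Real.continuous_exp.continuousAt.comp hca
    refine hce.congr ?_
    filter_upwards [isOpen_interior.mem_nhds hxi] with y hy
    rw [Real.exp_log (hsub hy)]
  · have hopen : IsOpen (closure I)ᶜ := isClosed_closure.isOpen_compl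
    have heq : (fun _ : ℝ => (0:ℝ)) =ᶠ[nhds x] g := by
      filter_upwards [hopen.mem_nhds hxo] with y hy
      have hyI : ¬ 0 < g y := fun h => hy (subset_closure h)
      exact (le_antisymm (not_lt.1 hyI) (hg0 y)).symm
    exact continuousAt_const.congr heq

/-- FTC for the CDF at continuity points. -/
lemma cdf_hasDeriv (hgi : Integrable g) {x : ℝ} (hc : ContinuousAt g x) :
    HasDerivAt (cdfOf g) (g x) x := by
  have hfun : cdfOf g = fun u => cdfOf g 0 + ∫ t in (0:ℝ)..u, g t := by
    funext u
    have h' : (∫ s in Set.Iic u, g s) - (∫ s in Set.Iic 0, g s) = ∫ t in (0:ℝ)..u, g t :=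
      intervalIntegral.integral_Iic_sub_Iic hgi.integrableOn hgi.integrableOn
    show (∫ s in Set.Iic u, g s) = (∫ s in Set.Iic 0, g s) + ∫ t in (0:ℝ)..u, g t
    linarith
  rw [hfun]
  exact (intervalIntegral.integral_hasDerivAt_right hgi.intervalIntegrable
    hgi.aestronglyMeasurable.stronglyMeasurableAtFilter hc).const_add _

lemma g_shift_aesm (hgi : Integrable g) (c : ℝ) :
    AEStronglyMeasurable (fun t : ℝ => g (t + c)) volume :=
  hgi.aestronglyMeasurable.comp_measurePreserving (measurePreserving_add_right volume c)

lemma g_shift_aesm' (hgi : Integrable g) (c : ℝ) :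
    AEStronglyMeasurable (fun t : ℝ => g (c + t + 1)) volume := by
  refine (g_shift_aesm hgi (c + 1)).congr (Filter.Eventually.of_forall fun t => ?_)
  congr 1
  ring

lemma g_shift_int (hgi : Integrable g) (c : ℝ) :
    Integrable (fun t : ℝ => g (t + c)) volume :=
  ((measurePreserving_add_right volume c).integrable_comp hgi.aestronglyMeasurable).2 hgi

lemma prod_meas (hg0 : ∀ t, 0 ≤ g t) (hgi : Integrable g) {m : ℕ} (u : Finset (Fin m))
    (c : Fin m → ℝ) :
    Measurable fun t : ℝ => ∏ l ∈ u, cdfOf g (c l + t + 1) :=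
  Finset.measurable_prod u fun l _ =>
    (cdf_mono hg0 hgi).measurable.comp ((measurable_id.const_add (c l)).add_const 1)

lemma prod_nonneg' (hg0 : ∀ t, 0 ≤ g t) {m : ℕ} (u : Finset (Fin m)) (c : Fin m → ℝ)
    (t : ℝ) : 0 ≤ ∏ l ∈ u, cdfOf g (c l + t + 1) :=
  Finset.prod_nonneg fun l _ => cdf_nonneg hg0 _

lemma prod_le_one' (hg0 : ∀ t, 0 ≤ g t) (hgi : Integrable g) (hg1 : ∫ t : ℝ, g t = 1)
    {m : ℕ} (u : Finset (Fin m)) (c : Fin m → ℝ) (t : ℝ) :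
    (∏ l ∈ u, cdfOf g (c l + t + 1)) ≤ 1 :=
  Finset.prod_le_one (fun l _ => cdf_nonneg hg0 _) (fun l _ => cdf_le_one hg0 hgi hg1 _)

/-- The core integrand is integrable. -/
lemma core_int (hg0 : ∀ t, 0 ≤ g t) (hgi : Integrable g) (hg1 : ∫ t : ℝ, g t = 1)
    {Cb : ℝ} (hCb1 : 1 ≤ Cb) (hgC : ∀ x, g x ≤ Cb)
    {m : ℕ} (u : Finset (Fin m)) (c : Fin m → ℝ) (d : ℝ) :
    Integrable (fun t : ℝ => g (d + t + 1) *
      ((∏ l ∈ u, cdfOf g (c l + t + 1)) * g t)) volume := by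
  refine Integrable.mono' (hgi.const_mul Cb) ?_ ?_
  · exact (g_shift_aesm' hgi d).mul
      (((prod_meas hg0 hgi u c).aestronglyMeasurable).mul hgi.aestronglyMeasurable)
  · refine Filter.Eventually.of_forall fun t => ?_
    have h1 := prod_nonneg' hg0 u c t
    have h2 := prod_le_one' hg0 hgi hg1 u c t
    rw [Real.norm_eq_abs, abs_of_nonneg (mul_nonneg (hg0 _) (mul_nonneg h1 (hg0 t)))]
    calc g (d + t + 1) * ((∏ l ∈ u, cdfOf g (c l + t + 1)) * g t)
        ≤ Cb * ((∏ l ∈ u, cdfOf g (c l + t + 1)) * g t) :=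
          mul_le_mul_of_nonneg_right (hgC _) (mul_nonneg h1 (hg0 t))
      _ ≤ Cb * (1 * g t) := by
          refine mul_le_mul_of_nonneg_left ?_ (le_trans zero_le_one hCb1)
          exact mul_le_mul_of_nonneg_right h2 (hg0 t)
      _ = Cb * g t := by ring

lemma abs_prod_sub_prod {ι : Type*} (u : Finset ι) (a b : ι → ℝ)
    (ha : ∀ i ∈ u, 0 ≤ a i ∧ a i ≤ 1) (hb : ∀ i ∈ u, 0 ≤ b i ∧ b i ≤ 1) :
    |(∏ i ∈ u, a i) - ∏ i ∈ u, b i| ≤ ∑ i ∈ u, |a i - b i| := by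
  classical
  revert ha hb
  induction u using Finset.cons_induction with
  | empty => intro _ _; simp
  | cons i u hi ih =>
    intro ha hb
    rw [Finset.prod_cons, Finset.prod_cons, Finset.sum_cons]
    have haP : (0:ℝ) ≤ ∏ x ∈ u, a x :=
      Finset.prod_nonneg fun x hx => (ha x (Finset.mem_cons_of_mem hx)).1
    have hbP : (0:ℝ) ≤ ∏ x ∈ u, b x :=
      Finset.prod_nonneg fun x hx => (hb x (Finset.mem_cons_of_mem hx)).1
    have hbP1 : (∏ x ∈ u, b x) ≤ 1 :=
      Finset.prod_le_one (fun x hx => (hb x (Finset.mem_cons_of_mem hx)).1)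
        (fun x hx => (hb x (Finset.mem_cons_of_mem hx)).2)
    have hai := ha i (Finset.mem_cons_self i u)
    have hbi := hb i (Finset.mem_cons_self i u)
    have ihu := ih (fun x hx => ha x (Finset.mem_cons_of_mem hx))
      (fun x hx => hb x (Finset.mem_cons_of_mem hx))
    have habs1 : |a i| ≤ 1 := by rw [abs_of_nonneg hai.1]; exact hai.2
    have habs2 : |∏ x ∈ u, b x| ≤ 1 := by rw [abs_of_nonneg hbP]; exact hbP1
    calc |a i * ∏ x ∈ u, a x - b i * ∏ x ∈ u, b x|
        = |a i * ((∏ x ∈ u, a x) - ∏ x ∈ u, b x) + (a i - b i) * ∏ x ∈ u, b x| := by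
          ring_nf
      _ ≤ |a i * ((∏ x ∈ u, a x) - ∏ x ∈ u, b x)| + |(a i - b i) * ∏ x ∈ u, b x| :=
          abs_add_le _ _
      _ ≤ 1 * |(∏ x ∈ u, a x) - ∏ x ∈ u, b x| + |a i - b i| * 1 := by
          rw [abs_mul, abs_mul]
          exact add_le_add (mul_le_mul_of_nonneg_right habs1 (abs_nonneg _))
            (mul_le_mul_of_nonneg_left habs2 (abs_nonneg _))
      _ ≤ |a i - b i| + ∑ x ∈ u, |a x - b x| := by
          rw [one_mul, mul_one]; linarith

/-- The cross integral appearing in the derivative of `pateF` along the radial path. -/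
noncomputable def Cint (g : ℝ → ℝ) {m : ℕ} (v : Fin m → ℝ) (j l : Fin m) (s : ℝ) : ℝ :=
  ∫ t : ℝ, g (s * (v j - v l) + t + 1) *
    ((∏ l' ∈ (Finset.univ.erase j).erase l, cdfOf g (s * (v j - v l') + t + 1)) * g t)

/-- Derivative of each summand of `pateF (s • v)`. -/
lemma T_hasDerivAt (hg0 : ∀ t, 0 ≤ g t) (hgi : Integrable g) (hg1 : ∫ t : ℝ, g t = 1)
    {Cb : ℝ} (hCb1 : 1 ≤ Cb) (hgC : ∀ x, g x ≤ Cb)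
    (hcont : ∀ᵐ x : ℝ, ContinuousAt g x)
    {m : ℕ} (v : Fin m → ℝ) (j : Fin m) (s₀ : ℝ) :
    HasDerivAt (fun s => ∫ t : ℝ,
        (∏ l ∈ Finset.univ.erase j, cdfOf g (s * (v j - v l) + t + 1)) * g t)
      (∑ l ∈ Finset.univ.erase j, (v j - v l) * Cint g v j l s₀) s₀ := by
  classical
  have hG0 := cdf_nonneg (g := g) hg0
  have hG1 := cdf_le_one hg0 hgi hg1
  have Pmeas : ∀ s : ℝ,
      Measurable fun t : ℝ => ∏ l ∈ Finset.univ.erase j, cdfOf g (s * (v j - v l) + t + 1) :=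
    fun s => prod_meas hg0 hgi _ (fun l => s * (v j - v l))
  have hbdd : ∀ s t : ℝ,
      |∏ l ∈ Finset.univ.erase j, cdfOf g (s * (v j - v l) + t + 1)| ≤ 1 := by
    intro s t
    rw [abs_of_nonneg (prod_nonneg' hg0 _ _ t)]
    exact prod_le_one' hg0 hgi hg1 _ _ t
  -- hypotheses of the dominated differentiation lemma
  have hFmeas : ∀ᶠ s in nhds s₀, AEStronglyMeasurable
      (fun t : ℝ => (∏ l ∈ Finset.univ.erase j, cdfOf g (s * (v j - v l) + t + 1)) * g t)
      volume :=
    Filter.Eventually.of_forall fun s =>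
      (Pmeas s).aestronglyMeasurable.mul hgi.aestronglyMeasurable
  have hFint : Integrable
      (fun t : ℝ => (∏ l ∈ Finset.univ.erase j, cdfOf g (s₀ * (v j - v l) + t + 1)) * g t)
      volume := by
    refine Integrable.mono' hgi ((Pmeas s₀).aestronglyMeasurable.mul hgi.aestronglyMeasurable)
      (Filter.Eventually.of_forall fun t => ?_)
    rw [Real.norm_eq_abs, abs_mul, abs_of_nonneg (hg0 t)]
    calc |∏ l ∈ Finset.univ.erase j, cdfOf g (s₀ * (v j - v l) + t + 1)| * g t
        ≤ 1 * g t := mul_le_mul_of_nonneg_right (hbdd s₀ t) (hg0 t)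
      _ = g t := one_mul _
  have hF'meas : AEStronglyMeasurable (fun t : ℝ =>
      (∑ l ∈ Finset.univ.erase j,
        (∏ l' ∈ (Finset.univ.erase j).erase l, cdfOf g (s₀ * (v j - v l') + t + 1)) *
          (g (s₀ * (v j - v l) + t + 1) * (v j - v l))) * g t) volume := by
    refine AEStronglyMeasurable.mul ?_ hgi.aestronglyMeasurable
    refine Finset.aestronglyMeasurable_fun_sum _ fun l _ => ?_
    exact ((prod_meas hg0 hgi _ (fun l' => s₀ * (v j - v l'))).aestronglyMeasurable).mul
      ((g_shift_aesm' hgi (s₀ * (v j - v l))).mul_const (v j - v l))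
  have hlip : ∀ᵐ t : ℝ, LipschitzOnWith
      (Real.nnabs ((∑ l ∈ Finset.univ.erase j, |v j - v l|) * (Cb * g t)))
      (fun s => (∏ l ∈ Finset.univ.erase j, cdfOf g (s * (v j - v l) + t + 1)) * g t)
      (Metric.ball s₀ 1) := by
    refine Filter.Eventually.of_forall fun t => ?_
    rw [lipschitzOnWith_iff_dist_le_mul]
    intro s _ s' _
    rw [Real.dist_eq, Real.dist_eq]
    have hcoe : ((Real.nnabs ((∑ l ∈ Finset.univ.erase j, |v j - v l|) * (Cb * g t))) : ℝ)
        = (∑ l ∈ Finset.univ.erase j, |v j - v l|) * (Cb * g t) := by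
      rw [Real.coe_nnabs, abs_of_nonneg]
      exact mul_nonneg (Finset.sum_nonneg fun l _ => abs_nonneg _)
        (mul_nonneg (le_trans zero_le_one hCb1) (hg0 t))
    rw [hcoe]
    have hps : |(∏ l ∈ Finset.univ.erase j, cdfOf g (s * (v j - v l) + t + 1)) -
        ∏ l ∈ Finset.univ.erase j, cdfOf g (s' * (v j - v l) + t + 1)| ≤
        ((∑ l ∈ Finset.univ.erase j, |v j - v l|) * Cb) * |s - s'| := by
      have h1 := abs_prod_sub_prod (Finset.univ.erase j)
        (fun l => cdfOf g (s * (v j - v l) + t + 1))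
        (fun l => cdfOf g (s' * (v j - v l) + t + 1))
        (fun l _ => ⟨hG0 _, hG1 _⟩) (fun l _ => ⟨hG0 _, hG1 _⟩)
      refine h1.trans ?_
      have h2 : ∀ l ∈ Finset.univ.erase j,
          |cdfOf g (s * (v j - v l) + t + 1) - cdfOf g (s' * (v j - v l) + t + 1)| ≤
          |v j - v l| * (Cb * |s - s'|) := by
        intro l _
        refine (cdf_lip hg0 hgi hgC _ _).trans ?_
        rw [show s * (v j - v l) + t + 1 - (s' * (v j - v l) + t + 1)
            = (s - s') * (v j - v l) by ring, abs_mul]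
        exact le_of_eq (by ring)
      refine (Finset.sum_le_sum h2).trans ?_
      rw [← Finset.sum_mul]
      exact le_of_eq (by ring)
    calc |(∏ l ∈ Finset.univ.erase j, cdfOf g (s * (v j - v l) + t + 1)) * g t -
          (∏ l ∈ Finset.univ.erase j, cdfOf g (s' * (v j - v l) + t + 1)) * g t|
        = |(∏ l ∈ Finset.univ.erase j, cdfOf g (s * (v j - v l) + t + 1)) -
            ∏ l ∈ Finset.univ.erase j, cdfOf g (s' * (v j - v l) + t + 1)| * g t := by
          rw [← sub_mul, abs_mul, abs_of_nonneg (hg0 t)]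
      _ ≤ (((∑ l ∈ Finset.univ.erase j, |v j - v l|) * Cb) * |s - s'|) * g t :=
          mul_le_mul_of_nonneg_right hps (hg0 t)
      _ = (∑ l ∈ Finset.univ.erase j, |v j - v l|) * (Cb * g t) * |s - s'| := by ring
  have hbint : Integrable
      (fun t : ℝ => (∑ l ∈ Finset.univ.erase j, |v j - v l|) * (Cb * g t)) volume :=
    (hgi.const_mul Cb).const_mul _
  have hdiff : ∀ᵐ t : ℝ, HasDerivAt
      (fun s => (∏ l ∈ Finset.univ.erase j, cdfOf g (s * (v j - v l) + t + 1)) * g t)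
      ((∑ l ∈ Finset.univ.erase j,
        (∏ l' ∈ (Finset.univ.erase j).erase l, cdfOf g (s₀ * (v j - v l') + t + 1)) *
          (g (s₀ * (v j - v l) + t + 1) * (v j - v l))) * g t) s₀ := by
    have hae : ∀ᵐ t : ℝ, ∀ l : Fin m, ContinuousAt g (s₀ * (v j - v l) + t + 1) := by
      rw [MeasureTheory.ae_all_iff]
      intro l
      have hqmp := (measurePreserving_add_right volume
        (s₀ * (v j - v l) + 1)).quasiMeasurePreserving
      rw [ae_iff] at hcont ⊢
      refine measure_mono_null (fun t ht => ?_) (hqmp.preimage_null hcont)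
      show t ∈ (fun x : ℝ => x + (s₀ * (v j - v l) + 1)) ⁻¹' {x | ¬ContinuousAt g x}
      simp only [Set.mem_preimage, Set.mem_setOf_eq]
      rw [show t + (s₀ * (v j - v l) + 1) = s₀ * (v j - v l) + t + 1 by ring]
      exact ht
    refine hae.mono fun t ht => ?_
    have hprod : HasDerivAt
        (fun s => ∏ l ∈ Finset.univ.erase j, cdfOf g (s * (v j - v l) + t + 1))
        (∑ l ∈ Finset.univ.erase j,
          (∏ l' ∈ (Finset.univ.erase j).erase l, cdfOf g (s₀ * (v j - v l') + t + 1)) •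
            (g (s₀ * (v j - v l) + t + 1) * (v j - v l))) s₀ := by
      refine HasDerivAt.fun_finsetProd fun l _ => ?_
      have hinner : HasDerivAt (fun s : ℝ => s * (v j - v l) + t + 1) (v j - v l) s₀ :=
        ((hasDerivAt_mul_const (v j - v l)).add_const t).add_const 1
      exact (cdf_hasDeriv hgi (ht l)).comp s₀ hinner
    have hres := hprod.mul_const (g t)
    simpa [smul_eq_mul] using hres
  obtain ⟨-, hder⟩ := hasDerivAt_integral_of_dominated_loc_of_lip
    (μ := volume) (s := Metric.ball s₀ 1)
    (bound := fun t : ℝ => (∑ l ∈ Finset.univ.erase j, |v j - v l|) * (Cb * g t))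
    (Metric.ball_mem_nhds s₀ one_pos) hFmeas hFint hF'meas hlip hbint hdiff
  have hval : (∫ t : ℝ, (∑ l ∈ Finset.univ.erase j,
      (∏ l' ∈ (Finset.univ.erase j).erase l, cdfOf g (s₀ * (v j - v l') + t + 1)) *
        (g (s₀ * (v j - v l) + t + 1) * (v j - v l))) * g t)
      = ∑ l ∈ Finset.univ.erase j, (v j - v l) * Cint g v j l s₀ := by
    have hsplit : ∀ t : ℝ, (∑ l ∈ Finset.univ.erase j,
        (∏ l' ∈ (Finset.univ.erase j).erase l, cdfOf g (s₀ * (v j - v l') + t + 1)) *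
          (g (s₀ * (v j - v l) + t + 1) * (v j - v l))) * g t
        = ∑ l ∈ Finset.univ.erase j, (v j - v l) * (g (s₀ * (v j - v l) + t + 1) *
            ((∏ l' ∈ (Finset.univ.erase j).erase l,
              cdfOf g (s₀ * (v j - v l') + t + 1)) * g t)) := by
      intro t
      rw [Finset.sum_mul]
      exact Finset.sum_congr rfl fun l _ => by ring
    calc (∫ t : ℝ, (∑ l ∈ Finset.univ.erase j,
          (∏ l' ∈ (Finset.univ.erase j).erase l, cdfOf g (s₀ * (v j - v l') + t + 1)) *
            (g (s₀ * (v j - v l) + t + 1) * (v j - v l))) * g t)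
        = ∫ t : ℝ, ∑ l ∈ Finset.univ.erase j, (v j - v l) * (g (s₀ * (v j - v l) + t + 1) *
            ((∏ l' ∈ (Finset.univ.erase j).erase l,
              cdfOf g (s₀ * (v j - v l') + t + 1)) * g t)) :=
          integral_congr_ae (Filter.Eventually.of_forall hsplit)
      _ = ∑ l ∈ Finset.univ.erase j, ∫ t : ℝ, (v j - v l) * (g (s₀ * (v j - v l) + t + 1) *
            ((∏ l' ∈ (Finset.univ.erase j).erase l,
              cdfOf g (s₀ * (v j - v l') + t + 1)) * g t)) := by
          refine integral_finset_sum _ fun l _ => ?_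
          exact (core_int hg0 hgi hg1 hCb1 hgC _ _ _).const_mul _
      _ = ∑ l ∈ Finset.univ.erase j, (v j - v l) * Cint g v j l s₀ := by
          refine Finset.sum_congr rfl fun l _ => ?_
          rw [integral_const_mul]
          rfl
  rw [← hval]
  exact hder

/-- The exchange inequality between the two cross integrals of a pair. -/
lemma Cint_le (hg0 : ∀ t, 0 ≤ g t) (hgi : Integrable g) (hg1 : ∫ t : ℝ, g t = 1)
    (hlc : LogConcave g) {Cb : ℝ} (hCb1 : 1 ≤ Cb) (hgC : ∀ x, g x ≤ Cb)
    {m : ℕ} (v : Fin m → ℝ) {j l : Fin m} {s : ℝ} (hs : 0 ≤ s)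
    (hvl : v l ≤ v j) :
    Cint g v j l s ≤ Cint g v l j s := by
  classical
  have hw0 : 0 ≤ s * (v j - v l) := mul_nonneg hs (sub_nonneg.2 hvl)
  have hset : (Finset.univ.erase l).erase j = (Finset.univ.erase j).erase l :=
    Finset.erase_right_comm
  have hRHS : Cint g v l j s = ∫ t : ℝ, g (t + 1) *
      ((∏ l' ∈ (Finset.univ.erase j).erase l, cdfOf g (s * (v j - v l') + t + 1)) *
        g (t + s * (v j - v l))) := by
    have e1 := integral_add_right_eq_self (μ := volume)
      (fun t : ℝ => g (s * (v l - v j) + t + 1) *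
        ((∏ l' ∈ (Finset.univ.erase l).erase j, cdfOf g (s * (v l - v l') + t + 1)) * g t))
      (s * (v j - v l))
    have e2 : (∫ t : ℝ, g (s * (v l - v j) + (t + s * (v j - v l)) + 1) *
        ((∏ l' ∈ (Finset.univ.erase l).erase j,
          cdfOf g (s * (v l - v l') + (t + s * (v j - v l)) + 1)) * g (t + s * (v j - v l))))
        = ∫ t : ℝ, g (t + 1) *
        ((∏ l' ∈ (Finset.univ.erase j).erase l, cdfOf g (s * (v j - v l') + t + 1)) *
          g (t + s * (v j - v l))) := by
      refine integral_congr_ae (Filter.Eventually.of_forall fun t => ?_)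
      beta_reduce
      rw [show s * (v l - v j) + (t + s * (v j - v l)) + 1 = t + 1 by ring, hset]
      congr 2
      refine Finset.prod_congr rfl fun l' _ => ?_
      rw [show s * (v l - v l') + (t + s * (v j - v l)) + 1 = s * (v j - v l') + t + 1 by ring]
    calc Cint g v l j s
        = ∫ t : ℝ, g (s * (v l - v j) + t + 1) *
          ((∏ l' ∈ (Finset.univ.erase l).erase j,
            cdfOf g (s * (v l - v l') + t + 1)) * g t) := rfl
      _ = ∫ t : ℝ, g (s * (v l - v j) + (t + s * (v j - v l)) + 1) *
          ((∏ l' ∈ (Finset.univ.erase l).erase j,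
            cdfOf g (s * (v l - v l') + (t + s * (v j - v l)) + 1)) *
              g (t + s * (v j - v l))) := e1.symm
      _ = _ := e2
  rw [hRHS]
  have hLHS : Cint g v j l s = ∫ t : ℝ, g (s * (v j - v l) + t + 1) *
      ((∏ l' ∈ (Finset.univ.erase j).erase l, cdfOf g (s * (v j - v l') + t + 1)) * g t) := rfl
  rw [hLHS]
  refine integral_mono ?_ ?_ ?_
  · exact core_int hg0 hgi hg1 hCb1 hgC _ _ _
  · refine Integrable.mono' ((g_shift_int hgi (s * (v j - v l))).const_mul Cb) ?_
      (Filter.Eventually.of_forall fun t => ?_)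
    · exact (g_shift_aesm hgi 1).mul
        (((prod_meas hg0 hgi _ _).aestronglyMeasurable).mul
          (g_shift_aesm hgi (s * (v j - v l))))
    · have h1 := prod_nonneg' hg0 ((Finset.univ.erase j).erase l)
        (fun l' => s * (v j - v l')) t
      have h2 := prod_le_one' hg0 hgi hg1 ((Finset.univ.erase j).erase l)
        (fun l' => s * (v j - v l')) t
      rw [Real.norm_eq_abs,
        abs_of_nonneg (mul_nonneg (hg0 _) (mul_nonneg h1 (hg0 _)))]
      calc g (t + 1) * ((∏ l' ∈ (Finset.univ.erase j).erase l,
            cdfOf g (s * (v j - v l') + t + 1)) * g (t + s * (v j - v l)))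
          ≤ Cb * ((∏ l' ∈ (Finset.univ.erase j).erase l,
            cdfOf g (s * (v j - v l') + t + 1)) * g (t + s * (v j - v l))) :=
            mul_le_mul_of_nonneg_right (hgC _) (mul_nonneg h1 (hg0 _))
        _ ≤ Cb * (1 * g (t + s * (v j - v l))) := by
            refine mul_le_mul_of_nonneg_left ?_ (le_trans zero_le_one hCb1)
            exact mul_le_mul_of_nonneg_right h2 (hg0 _)
        _ = Cb * g (t + s * (v j - v l)) := by ring
  · intro t
    have hQ := prod_nonneg' hg0 ((Finset.univ.erase j).erase l)
      (fun l' => s * (v j - v l')) t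
    have hk := swap_ineq hg0 hlc hw0 t
    calc g (s * (v j - v l) + t + 1) *
          ((∏ l' ∈ (Finset.univ.erase j).erase l, cdfOf g (s * (v j - v l') + t + 1)) * g t)
        = (∏ l' ∈ (Finset.univ.erase j).erase l, cdfOf g (s * (v j - v l') + t + 1)) *
          (g (s * (v j - v l) + t + 1) * g t) := by ring
      _ ≤ (∏ l' ∈ (Finset.univ.erase j).erase l, cdfOf g (s * (v j - v l') + t + 1)) *
          (g (t + 1) * g (t + s * (v j - v l))) := by
          refine mul_le_mul_of_nonneg_left ?_ hQ
          exact hk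
      _ = g (t + 1) * ((∏ l' ∈ (Finset.univ.erase j).erase l,
          cdfOf g (s * (v j - v l') + t + 1)) * g (t + s * (v j - v l))) := by ring

end Stmt7Aux

/-- On the simplex of histograms `v ∈ ℝ_{≥0}^m` of fixed total vote
count `S`, the entrywise leakage `f` of Report-Noisy-Max with log-concave noise is
maximized at the uniform histogram `(S/m, …, S/m)`. -/
theorem stmt7 (g : ℝ → ℝ) (hg0 : ∀ t, 0 ≤ g t) (hgi : Integrable g)
    (hg1 : ∫ t : ℝ, g t = 1) (hlc : LogConcave g)
    (m : ℕ) (hm : 2 ≤ m) (S : ℝ) (hS : 0 ≤ S)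
    (v : Fin m → ℝ) (hv : ∀ i, 0 ≤ v i) (hsum : ∑ i, v i = S) :
    pateF m g v ≤ pateF m g (fun _ => S / m) := by
  classical
  obtain ⟨Cb, hCb1, hgC⟩ := Stmt7Aux.exists_bound hg0 hgi hg1 hlc
  have hcont := Stmt7Aux.ae_continuous hg0 hlc
  set φ : ℝ → ℝ := fun s => ∑ j : Fin m, ∫ t : ℝ,
      (∏ l ∈ Finset.univ.erase j, cdfOf g (s * (v j - v l) + t + 1)) * g t with hφ
  have hder : ∀ s₀ : ℝ, HasDerivAt φ
      (∑ j : Fin m, ∑ l ∈ Finset.univ.erase j, (v j - v l) * Stmt7Aux.Cint g v j l s₀) s₀ := by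
    intro s₀
    rw [hφ]
    exact HasDerivAt.fun_sum fun j _ => Stmt7Aux.T_hasDerivAt hg0 hgi hg1 hCb1 hgC hcont v j s₀
  have hsign : ∀ s : ℝ, 0 ≤ s →
      (∑ j : Fin m, ∑ l ∈ Finset.univ.erase j, (v j - v l) * Stmt7Aux.Cint g v j l s) ≤ 0 := by
    intro s hs
    have hswap : (∑ j : Fin m, ∑ l ∈ Finset.univ.erase j, (v j - v l) * Stmt7Aux.Cint g v j l s)
        = ∑ j : Fin m, ∑ l ∈ Finset.univ.erase j, (v l - v j) * Stmt7Aux.Cint g v l j s := by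
      refine Finset.sum_comm' ?_
      intro x y
      simp only [Finset.mem_univ, Finset.mem_erase, true_and, and_true]
      exact ne_comm
    have hterm : ∀ j : Fin m, ∀ l ∈ Finset.univ.erase j,
        (v j - v l) * Stmt7Aux.Cint g v j l s + (v l - v j) * Stmt7Aux.Cint g v l j s ≤ 0 := by
      intro j l hl
      rcases le_total (v l) (v j) with hv' | hv'
      · have hC := Stmt7Aux.Cint_le hg0 hgi hg1 hlc hCb1 hgC v hs hv'
        nlinarith [hC, sub_nonneg.2 hv']
      · have hC := Stmt7Aux.Cint_le hg0 hgi hg1 hlc hCb1 hgC v hs hv'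
        nlinarith [hC, sub_nonneg.2 hv']
    have h2 : (∑ j : Fin m, ∑ l ∈ Finset.univ.erase j, (v j - v l) * Stmt7Aux.Cint g v j l s)
        + (∑ j : Fin m, ∑ l ∈ Finset.univ.erase j, (v j - v l) * Stmt7Aux.Cint g v j l s) ≤ 0 := by
      nth_rewrite 2 [hswap]
      rw [← Finset.sum_add_distrib]
      refine Finset.sum_nonpos fun j _ => ?_
      rw [← Finset.sum_add_distrib]
      exact Finset.sum_nonpos fun l hl => hterm j l hl
    linarith
  have hanti : AntitoneOn φ (Set.Icc (0:ℝ) 1) := by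
    refine antitoneOn_of_deriv_nonpos (convex_Icc 0 1) ?_ ?_ ?_
    · exact fun s _ => (hder s).continuousAt.continuousWithinAt
    · exact fun s _ => (hder s).differentiableAt.differentiableWithinAt
    · intro s hs
      rw [interior_Icc] at hs
      rw [(hder s).deriv]
      exact hsign s hs.1.le
  have hφ10 : φ 1 ≤ φ 0 :=
    hanti (Set.mem_Icc.2 ⟨le_refl 0, zero_le_one⟩)
      (Set.mem_Icc.2 ⟨zero_le_one, le_refl 1⟩) zero_le_one
  have e1 : φ 1 = pateF m g v := by
    rw [hφ]
    simp only [pateF, one_mul]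
  have e0 : φ 0 = pateF m g (fun _ => S / m) := by
    rw [hφ]
    simp only [pateF, zero_mul, zero_add, sub_self]
  rw [← e1, ← e0]
  exact hφ10
end

section
/- Let g : ℝ → ℝ be a log-concave probability density function with CDF G, let m ≥ 2 be an integer, and let v ∈ ℝ^m be sorted in non-increasing order, v₁ ≥ v₂ ≥ … ≥ v_m. Then ∫_ℝ (∏_{k=3}^m G(u + v₂ − v_k + 1)) · [ g(u + 1)·g(u + v₂ − v₁) − g(u)·g(u + v₂ − v₁ + 1) ] du ≤ 0. -/
open MeasureTheory Finset

lemma fourpoint (g : ℝ → ℝ) (hg0 : ∀ t, 0 ≤ g t) (hlc : LogConcave g)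
    {x₁ x₂ d : ℝ} (h : x₁ ≤ x₂) (hd : 0 ≤ d) :
    g x₁ * g (x₂ + d) ≤ g (x₁ + d) * g x₂ := by
  set L := x₂ - x₁ + d with hL
  rcases eq_or_lt_of_le (by linarith : (0:ℝ) ≤ L) with h0 | hpos
  · have hd0 : d = 0 := by nlinarith
    have hx : x₂ = x₁ := by nlinarith
    simp [hd0, hx]
  · set a := d / L with ha
    set b := (x₂ - x₁) / L with hb
    have ha0 : 0 ≤ a := div_nonneg hd hpos.le
    have hb0 : 0 ≤ b := div_nonneg (by linarith) hpos.le
    have hab : a + b = 1 := by rw [ha, hb, ← add_div, div_eq_iff hpos.ne', hL]; ring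
    have e1 : b * x₁ + a * (x₂ + d) = x₁ + d := by
      rw [ha, hb, div_mul_eq_mul_div, div_mul_eq_mul_div, ← add_div, div_eq_iff hpos.ne', hL]; ring
    have e2 : a * x₁ + b * (x₂ + d) = x₂ := by
      rw [ha, hb, div_mul_eq_mul_div, div_mul_eq_mul_div, ← add_div, div_eq_iff hpos.ne', hL]; ring
    have h1 := hlc x₁ (x₂ + d) b a hb0 ha0 (by linarith)
    have h2 := hlc x₁ (x₂ + d) a b ha0 hb0 hab
    rw [e1] at h1; rw [e2] at h2
    have key : g x₁ ^ b * g (x₂ + d) ^ a * (g x₁ ^ a * g (x₂ + d) ^ b)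
        = g x₁ * g (x₂ + d) := by
      rw [show g x₁ ^ b * g (x₂ + d) ^ a * (g x₁ ^ a * g (x₂ + d) ^ b)
          = (g x₁ ^ b * g x₁ ^ a) * (g (x₂ + d) ^ a * g (x₂ + d) ^ b) by ring,
        ← Real.rpow_add_of_nonneg (hg0 x₁) hb0 ha0,
        ← Real.rpow_add_of_nonneg (hg0 (x₂ + d)) ha0 hb0,
        show b + a = 1 by linarith, show a + b = 1 from hab,
        Real.rpow_one, Real.rpow_one]
    calc g x₁ * g (x₂ + d) = _ := key.symm
      _ ≤ g (x₁ + d) * g x₂ := by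
        apply mul_le_mul h1 h2 (mul_nonneg (Real.rpow_nonneg (hg0 _) _)
          (Real.rpow_nonneg (hg0 _) _)) (hg0 _)

/-- the auxiliary inequality `A₁ − A₂ ≤ 0` used to verify Schur's
condition for `pateF`. `v : Fin m → ℝ` is sorted in non-increasing order (`Antitone v`),
so `v ⟨0,_⟩, v ⟨1,_⟩` play the roles of `v₁, v₂`, and the product runs over indices
`k` with `(k : ℕ) ≥ 2`, i.e., over `v₃, …, v_m`. -/
theorem stmt9 (g : ℝ → ℝ) (hg0 : ∀ t, 0 ≤ g t) (hgi : Integrable g)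
    (hg1 : ∫ t : ℝ, g t = 1) (hlc : LogConcave g)
    (m : ℕ) (hm : 2 ≤ m) (v : Fin m → ℝ) (hv : Antitone v) :
    (∫ u : ℝ,
      (∏ k ∈ Finset.univ.filter (fun k : Fin m => 2 ≤ (k : ℕ)),
          cdfOf g (u + v ⟨1, by omega⟩ - v k + 1)) *
        (g (u + 1) * g (u + v ⟨1, by omega⟩ - v ⟨0, by omega⟩) -
          g u * g (u + v ⟨1, by omega⟩ - v ⟨0, by omega⟩ + 1))) ≤ 0 := by
  apply integral_nonpos
  intro u
  apply mul_nonpos_of_nonneg_of_nonpos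
  · exact Finset.prod_nonneg fun k _ =>
      setIntegral_nonneg measurableSet_Iic fun s _ => hg0 s
  · have hδ : v ⟨1, by omega⟩ ≤ v ⟨0, by omega⟩ := hv (by simp [Fin.le_def])
    have key := fourpoint g hg0 hlc
      (show u + v ⟨1, by omega⟩ - v ⟨0, by omega⟩ ≤ u by linarith) zero_le_one
    have key' : g (u + 1) * g (u + v ⟨1, by omega⟩ - v ⟨0, by omega⟩) ≤
        g u * g (u + v ⟨1, by omega⟩ - v ⟨0, by omega⟩ + 1) := by
      rw [mul_comm, mul_comm (g u)]; exact key
    linarith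
end

section
/- Let g : ℝ → ℝ be a log-concave probability density function with CDF G, let m ≥ 3 be an integer, let v ∈ ℝ^m be sorted in non-increasing order v₁ ≥ v₂ ≥ … ≥ v_m, and let j ∈ {3, …, m}. Then ∫_ℝ (∏_{k=3, k≠j}^m G(u + v_j − v_k + 1)) · [ G(u + v_j − v₂ + 1)·( g(u+1)·g(u + v_j − v₁) − g(u)·g(u + v_j − v₁ + 1) ) + G(u + v_j − v₁ + 1)·( g(u)·g(u + v_j − v₂ + 1) − g(u+1)·g(u + v_j − v₂) ) ] du ≤ 0. -/
open MeasureTheory Finset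

/-- Two-point inequality for log-concave functions: moving two points closer together
(keeping their sum fixed) increases the product. -/
lemma logConcave_two_point {g : ℝ → ℝ} (hg0 : ∀ t, 0 ≤ g t) (hlc : LogConcave g)
    {x x' y' y : ℝ} (hxx : x ≤ x') (hxy : x ≤ y') (hyy : y' ≤ y)
    (hsum : x + y = x' + y') : g x * g y ≤ g x' * g y' := by
  rcases eq_or_lt_of_le hxx with h | h
  · have hy : y = y' := by linarith
    rw [← h, ← hy]
  · have hT : 0 < y - x := by linarith
    set a : ℝ := (y - x') / (y - x) with ha_def
    set b : ℝ := (x' - x) / (y - x) with hb_def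
    have hxy' : x' ≤ y := by linarith
    have ha : 0 ≤ a := div_nonneg (by linarith) hT.le
    have hb : 0 ≤ b := div_nonneg (by linarith) hT.le
    have hab : a + b = 1 := by
      rw [ha_def, hb_def, ← add_div, div_eq_one_iff_eq hT.ne']; ring
    have hx' : a * x + b * y = x' := by
      rw [ha_def, hb_def, div_mul_eq_mul_div, div_mul_eq_mul_div, ← add_div,
        div_eq_iff hT.ne']; ring
    have hy' : b * x + a * y = y' := by
      have : x' + y' = x + y := hsum.symm
      rw [ha_def, hb_def, div_mul_eq_mul_div, div_mul_eq_mul_div, ← add_div,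
        div_eq_iff hT.ne']; linear_combination (x - y) * this
    have h1 := hlc x y a b ha hb hab
    have h2 := hlc x y b a hb ha (by linarith)
    rw [hx'] at h1
    rw [hy'] at h2
    have hgx : g x ^ a * g x ^ b = g x := by
      rw [← Real.rpow_add' (hg0 x) (by rw [hab]; norm_num), hab, Real.rpow_one]
    have hgy : g y ^ a * g y ^ b = g y := by
      rw [← Real.rpow_add' (hg0 y) (by rw [hab]; norm_num), hab, Real.rpow_one]
    calc g x * g y = (g x ^ a * g y ^ b) * (g x ^ b * g y ^ a) := by
          rw [show (g x ^ a * g y ^ b) * (g x ^ b * g y ^ a)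
              = (g x ^ a * g x ^ b) * (g y ^ a * g y ^ b) by ring, hgx, hgy]
      _ ≤ g x' * g y' := by
          apply mul_le_mul h1 h2 (mul_nonneg (Real.rpow_nonneg (hg0 x) b) (Real.rpow_nonneg (hg0 y) a)) (hg0 x')

/-- Unit-shift special case: for `x ≤ y`, `g x · g (y+1) ≤ g (x+1) · g y`. -/
lemma logConcave_shift {g : ℝ → ℝ} (hg0 : ∀ t, 0 ≤ g t) (hlc : LogConcave g)
    {x y : ℝ} (hxy : x ≤ y) : g x * g (y + 1) ≤ g (x + 1) * g y :=
  logConcave_two_point hg0 hlc (by linarith) (by linarith) (by linarith) (by ring)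

/-- A log-concave nonnegative function is positive on the interval between
two points where it is positive. -/
lemma logConcave_pos_between {g : ℝ → ℝ} (hg0 : ∀ t, 0 ≤ g t) (hlc : LogConcave g)
    {x y z : ℝ} (hxy : x ≤ y) (hyz : y ≤ z) (hx : 0 < g x) (hz : 0 < g z) :
    0 < g y := by
  rcases eq_or_lt_of_le hxy with h | h
  · rwa [← h]
  rcases eq_or_lt_of_le hyz with h' | h'
  · rwa [h']
  have hT : 0 < z - x := by linarith
  set a : ℝ := (z - y) / (z - x) with ha_def
  set b : ℝ := (y - x) / (z - x) with hb_def
  have ha : 0 ≤ a := div_nonneg (by linarith) hT.le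
  have hb : 0 ≤ b := div_nonneg (by linarith) hT.le
  have hab : a + b = 1 := by
    rw [ha_def, hb_def, ← add_div, div_eq_one_iff_eq hT.ne']; ring
  have hy : a * x + b * z = y := by
    rw [ha_def, hb_def, div_mul_eq_mul_div, div_mul_eq_mul_div, ← add_div,
      div_eq_iff hT.ne']; ring
  have := hlc x z a b ha hb hab
  rw [hy] at this
  calc (0:ℝ) < g x ^ a * g z ^ b := by positivity
    _ ≤ g y := this

lemma cdf_nonneg {g : ℝ → ℝ} (hg0 : ∀ t, 0 ≤ g t) (t : ℝ) : 0 ≤ cdfOf g t :=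
  setIntegral_nonneg measurableSet_Iic (fun x _ => hg0 x)

lemma cdf_mono {g : ℝ → ℝ} (hg0 : ∀ t, 0 ≤ g t) (hgi : Integrable g)
    {s t : ℝ} (hst : s ≤ t) : cdfOf g s ≤ cdfOf g t := by
  apply setIntegral_mono_set hgi.integrableOn
    (Filter.Eventually.of_forall fun x => hg0 x)
    (HasSubset.Subset.eventuallyLE (Set.Iic_subset_Iic.mpr hst))

/-- Translation identity for the CDF. -/
lemma cdf_translate (g : ℝ → ℝ) (s c : ℝ) :
    (∫ σ in Set.Iic s, g (σ + c)) = cdfOf g (s + c) := by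
  have h := (measurePreserving_add_right volume c).setIntegral_preimage_emb
    (measurableEmbedding_addRight c) g (Set.Iic (s + c))
  have hpre : (· + c) ⁻¹' Set.Iic (s + c) = Set.Iic s := by
    ext x; simp
  rw [hpre] at h
  exact h

/-- Hazard-rate monotonicity: for `s ≤ t`, `G(s)·g(t) ≤ G(t)·g(s)`. -/
lemma cdf_hazard {g : ℝ → ℝ} (hg0 : ∀ t, 0 ≤ g t) (hgi : Integrable g)
    (hlc : LogConcave g) {s t : ℝ} (hst : s ≤ t) :
    cdfOf g s * g t ≤ cdfOf g t * g s := by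
  have key : (∫ σ in Set.Iic s, g σ * g t) ≤ ∫ σ in Set.Iic s, g s * g (σ + (t - s)) := by
    apply setIntegral_mono_on (hgi.integrableOn.mul_const _)
      (((hgi.comp_add_right (t - s)).integrableOn).const_mul _) measurableSet_Iic
    intro σ hσ
    have hσs : σ ≤ s := hσ
    exact logConcave_two_point hg0 hlc hσs (by linarith) (by linarith) (by ring)
  calc cdfOf g s * g t = ∫ σ in Set.Iic s, g σ * g t := (integral_mul_const _ _).symm
    _ ≤ ∫ σ in Set.Iic s, g s * g (σ + (t - s)) := key
    _ = g s * ∫ σ in Set.Iic s, g (σ + (t - s)) := integral_const_mul _ _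
    _ = g s * cdfOf g (s + (t - s)) := by rw [cdf_translate]
    _ = cdfOf g t * g s := by rw [show s + (t - s) = t by ring, mul_comm]

/-- The pointwise bracket inequality: for `A ≤ B ≤ u`,
`G(B+1)(g(u+1)g(A) − g(u)g(A+1)) + G(A+1)(g(u)g(B+1) − g(u+1)g(B)) ≤ 0`. -/
lemma bracket_nonpos {g : ℝ → ℝ} (hg0 : ∀ t, 0 ≤ g t) (hgi : Integrable g)
    (hlc : LogConcave g) {A B u : ℝ} (hAB : A ≤ B) (hBu : B ≤ u) :
    cdfOf g (B + 1) * (g (u + 1) * g A - g u * g (A + 1)) +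
      cdfOf g (A + 1) * (g u * g (B + 1) - g (u + 1) * g B) ≤ 0 := by
  set P : ℝ := cdfOf g (B + 1) * g (A + 1) - cdfOf g (A + 1) * g (B + 1) with hP_def
  set Q : ℝ := cdfOf g (B + 1) * g A - cdfOf g (A + 1) * g B with hQ_def
  have hP : 0 ≤ P := by
    have := cdf_hazard hg0 hgi hlc (show A + 1 ≤ B + 1 by linarith)
    rw [hP_def]; linarith
  have hmain : g (u + 1) * Q ≤ g u * P := by
    rcases le_or_gt Q 0 with hQ | hQ
    · calc g (u + 1) * Q ≤ 0 := mul_nonpos_iff.mpr (Or.inl ⟨hg0 _, hQ⟩)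
        _ ≤ g u * P := mul_nonneg (hg0 _) hP
    · -- Q > 0
      rcases eq_or_lt_of_le (hg0 B) with hB | hB
      · -- g B = 0
        have hgA : 0 < g A := by
          by_contra h
          have : g A = 0 := le_antisymm (not_lt.mp h) (hg0 A)
          rw [hQ_def, this, ← hB] at hQ
          simp at hQ
        have hgu1 : g (u + 1) = 0 := by
          by_contra h
          have : 0 < g (u + 1) := lt_of_le_of_ne (hg0 _) (Ne.symm h)
          have := logConcave_pos_between hg0 hlc hAB (by linarith : B ≤ u + 1) hgA this
          rw [← hB] at this; exact lt_irrefl _ this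
        rw [hgu1, zero_mul]
        exact mul_nonneg (hg0 _) hP
      · -- g B > 0
        have h1 : g B * g (u + 1) ≤ g (B + 1) * g u := logConcave_shift hg0 hlc hBu
        have h2 : g (B + 1) * Q ≤ g B * P := by
          have halt : g A * g (B + 1) ≤ g (A + 1) * g B := logConcave_shift hg0 hlc hAB
          have hGnn : 0 ≤ cdfOf g (B + 1) := cdf_nonneg hg0 _
          have : g (B + 1) * Q - g B * P
              = cdfOf g (B + 1) * (g A * g (B + 1) - g (A + 1) * g B) := by
            rw [hQ_def, hP_def]; ring
          nlinarith [mul_nonneg hGnn (sub_nonneg.mpr halt)]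
        have step1 : g B * (g (u + 1) * Q) ≤ g B * (g u * P) := by
          calc g B * (g (u + 1) * Q) = (g B * g (u + 1)) * Q := by ring
            _ ≤ (g (B + 1) * g u) * Q := mul_le_mul_of_nonneg_right h1 hQ.le
            _ = g u * (g (B + 1) * Q) := by ring
            _ ≤ g u * (g B * P) := mul_le_mul_of_nonneg_left h2 (hg0 u)
            _ = g B * (g u * P) := by ring
        exact le_of_mul_le_mul_left step1 hB
  have : cdfOf g (B + 1) * (g (u + 1) * g A - g u * g (A + 1)) +
      cdfOf g (A + 1) * (g u * g (B + 1) - g (u + 1) * g B)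
      = g (u + 1) * Q - g u * P := by
    rw [hQ_def, hP_def]; ring
  linarith

/-- the auxiliary inequality `B_{(1,j)} − B_{(2,j)} + B_{(3,j)} − B_{(4,j)} ≤ 0`
used to verify Schur's condition for `pateF`. `v : Fin m → ℝ` is sorted in non-increasing
order (`Antitone v`), `v ⟨0,_⟩, v ⟨1,_⟩` play the roles of `v₁, v₂`, `j` is an index with
`(j : ℕ) ≥ 2` (i.e., `j ∈ {3,…,m}` in 1-based notation), and the product runs over the
remaining indices `k ≠ j` with `(k : ℕ) ≥ 2`. -/
theorem stmt10 (g : ℝ → ℝ) (hg0 : ∀ t, 0 ≤ g t) (hgi : Integrable g)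
    (hg1 : ∫ t : ℝ, g t = 1) (hlc : LogConcave g)
    (m : ℕ) (hm : 3 ≤ m) (v : Fin m → ℝ) (hv : Antitone v)
    (j : Fin m) (hj : 2 ≤ (j : ℕ)) :
    (∫ u : ℝ,
      (∏ k ∈ (Finset.univ.filter (fun k : Fin m => 2 ≤ (k : ℕ))).erase j,
          cdfOf g (u + v j - v k + 1)) *
        (cdfOf g (u + v j - v ⟨1, by omega⟩ + 1) *
            (g (u + 1) * g (u + v j - v ⟨0, by omega⟩) -
              g u * g (u + v j - v ⟨0, by omega⟩ + 1)) +
          cdfOf g (u + v j - v ⟨0, by omega⟩ + 1) *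
            (g u * g (u + v j - v ⟨1, by omega⟩ + 1) -
              g (u + 1) * g (u + v j - v ⟨1, by omega⟩)))) ≤ 0 := by
  apply integral_nonpos
  intro u
  have hv01 : v ⟨1, by omega⟩ ≤ v ⟨0, by omega⟩ := hv (by simp [Fin.le_def])
  have hv1j : v j ≤ v ⟨1, by omega⟩ := hv (by simp [Fin.le_def]; omega)
  have hbr := bracket_nonpos hg0 hgi hlc
    (show u + v j - v ⟨0, by omega⟩ ≤ u + v j - v ⟨1, by omega⟩ by linarith)
    (show u + v j - v ⟨1, by omega⟩ ≤ u by linarith)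
  have hprod : 0 ≤ ∏ k ∈ (Finset.univ.filter (fun k : Fin m => 2 ≤ (k : ℕ))).erase j,
      cdfOf g (u + v j - v k + 1) :=
    Finset.prod_nonneg fun k _ => cdf_nonneg hg0 _
  exact mul_nonpos_iff.mpr (Or.inl ⟨hprod, hbr⟩)
end

section
/- Let γ > 0 and define H : ℕ → ℝ by H(n) = γ·∫_{−1}^{0} (1 − (1/2)e^{−γ(t+1)})^n dt. Then H(0) = γ and, for every integer m ≥ 1, H(m) = H(m−1) + (1/m)·( 2^{−m} − (1 − (1/2)e^{−γ})^m ). Consequently, H(m) = γ + ∑_{k=1}^{m} (2^{−k} − (1 − (1/2)e^{−γ})^k)/k for all m ≥ 1. -/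
open MeasureTheory Finset Real

/-- for `H(n) = γ·∫_{−1}^0 (1 − (1/2)e^{−γ(t+1)})^n dt` one has `H(0) = γ`,
the recurrence `H(m) = H(m−1) + (1/m)·(2^{−m} − (1 − (1/2)e^{−γ})^m)` for `m ≥ 1`, and
the closed form `H(m) = γ + ∑_{k=1}^m (2^{−k} − (1 − (1/2)e^{−γ})^k)/k` for `m ≥ 1`. -/
theorem stmt13 (γ : ℝ) (hγ : 0 < γ) (H : ℕ → ℝ)
    (hH : ∀ n : ℕ, H n =
      γ * ∫ t in (-1 : ℝ)..0, (1 - (1 / 2) * Real.exp (-γ * (t + 1))) ^ n) :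
    H 0 = γ ∧
    (∀ m : ℕ, 1 ≤ m →
      H m = H (m - 1) +
        (1 / (m : ℝ)) * (((1 : ℝ) / 2) ^ m - (1 - (1 / 2) * Real.exp (-γ)) ^ m)) ∧
    (∀ m : ℕ, 1 ≤ m →
      H m = γ + ∑ k ∈ Finset.Icc 1 m,
        (((1 : ℝ) / 2) ^ k - (1 - (1 / 2) * Real.exp (-γ)) ^ k) / k) := by
  set c : ℝ → ℝ := fun t => 1 - (1 / 2) * Real.exp (-γ * (t + 1)) with hc
  have hcont : Continuous c := by
    rw [hc]; continuity
  have hint : ∀ n : ℕ, IntervalIntegrable (fun t => (c t) ^ n) volume (-1 : ℝ) 0 :=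
    fun n => (hcont.pow n).intervalIntegrable _ _
  have hderiv : ∀ (m : ℕ) (t : ℝ), HasDerivAt (fun s => (c s) ^ (m + 1) / (m + 1))
      (γ * ((c t) ^ m - (c t) ^ (m + 1))) t := by
    intro m t
    have h1 : HasDerivAt (fun s : ℝ => -γ * (s + 1)) (-γ) t := by
      simpa using ((hasDerivAt_id t).add_const 1).const_mul (-γ)
    have h2 : HasDerivAt (fun s => Real.exp (-γ * (s + 1)))
        (Real.exp (-γ * (t + 1)) * (-γ)) t := h1.exp
    have hf : HasDerivAt c (γ / 2 * Real.exp (-γ * (t + 1))) t := by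
      have : HasDerivAt c (-(1 / 2 * (Real.exp (-γ * (t + 1)) * -γ))) t :=
        (h2.const_mul (1 / 2 : ℝ)).const_sub 1
      convert this using 1
      ring
    have hd := (hf.pow (m + 1)).div_const ((m : ℝ) + 1)
    have hne : ((m : ℝ) + 1) ≠ 0 := by positivity
    have hE : Real.exp (-γ * (t + 1)) = 2 * (1 - c t) := by rw [hc]; ring
    have hval : (↑(m + 1) : ℝ) * c t ^ (m + 1 - 1) * (γ / 2 * Real.exp (-γ * (t + 1))) / ((m : ℝ) + 1)
        = γ * ((c t) ^ m - (c t) ^ (m + 1)) := by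
      simp only [Nat.add_sub_cancel]
      rw [hE]
      push_cast
      field_simp
      ring
    rw [hval] at hd
    exact hd
  have key : ∀ m : ℕ, ∫ t in (-1 : ℝ)..0, γ * ((c t) ^ m - (c t) ^ (m + 1)) =
      (c 0) ^ (m + 1) / (m + 1) - (c (-1)) ^ (m + 1) / (m + 1) := by
    intro m
    have := intervalIntegral.integral_eq_sub_of_hasDerivAt (a := (-1 : ℝ)) (b := (0 : ℝ)) (f := fun s => (c s) ^ (m + 1) / ((m : ℝ) + 1))
      (fun t _ => hderiv m t)
      ((continuous_const.mul ((hcont.pow m).sub (hcont.pow (m + 1)))).intervalIntegrable _ _)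
    simpa using this
  have hc0 : c 0 = 1 - (1 / 2) * Real.exp (-γ) := by simp [hc]
  have hcm1 : c (-1) = 1 / 2 := by simp [hc]; norm_num
  have hH0 : H 0 = γ := by
    rw [hH 0]; simp
  have hrec : ∀ n : ℕ, H (n + 1) = H n +
      (1 / ((n : ℝ) + 1)) * (((1 : ℝ) / 2) ^ (n + 1) - (1 - (1 / 2) * Real.exp (-γ)) ^ (n + 1)) := by
    intro n
    have hsplit : ∫ t in (-1 : ℝ)..0, γ * ((c t) ^ n - (c t) ^ (n + 1)) =
        γ * (∫ t in (-1 : ℝ)..0, (c t) ^ n) - γ * (∫ t in (-1 : ℝ)..0, (c t) ^ (n + 1)) := by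
      rw [intervalIntegral.integral_const_mul, intervalIntegral.integral_sub (hint n) (hint (n + 1)),
        mul_sub]
    have hk := key n
    rw [hsplit, hc0, hcm1] at hk
    have h1 : H (n + 1) = γ * ∫ t in (-1 : ℝ)..0, (c t) ^ (n + 1) := hH (n + 1)
    have h2 : H n = γ * ∫ t in (-1 : ℝ)..0, (c t) ^ n := hH n
    rw [h1, h2] at *
    have hne : ((n : ℝ) + 1) ≠ 0 := by positivity
    field_simp at hk ⊢
    linarith
  refine ⟨hH0, ?_, ?_⟩
  · intro m hm
    obtain ⟨n, rfl⟩ := Nat.exists_eq_add_of_le hm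
    simpa [Nat.add_sub_cancel, add_comm 1 n, add_comm (n : ℝ) 1] using hrec n
  · intro m hm
    induction m with
    | zero => omega
    | succ n ih =>
      rcases Nat.eq_zero_or_pos n with h | h
      · subst h
        rw [hrec 0, hH0]
        norm_num
      · rw [hrec n, ih h, Finset.sum_Icc_succ_top (by omega : 1 ≤ n + 1)]
        push_cast
        ring
end

section
/- Let γ > 0 and define H(0) = γ and H(m) = γ + ∑_{k=1}^{m} (2^{−k} − (1 − (1/2)e^{−γ})^k)/k for integers m ≥ 1. Then: (i) H(m) ≥ 0 for all m ≥ 0; (ii) H(m+1) ≤ H(m) for all m ≥ 0, i.e., H is monotonically non-increasing; and (iii) H(m) → 0 as m → ∞. -/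
open MeasureTheory Finset Real

/-- The law of `m` i.i.d. real random variables `N₁,…,N_m` with Laplace density
`g(t) = (γ/2)·e^{−γ|t|}` (location 0, scale `1/γ`), as a product measure on `Fin m → ℝ`. -/
noncomputable def laplacePi (γ : ℝ) (m : ℕ) : Measure (Fin m → ℝ) :=
  Measure.pi fun _ =>
    volume.withDensity fun t => ENNReal.ofReal (γ / 2 * Real.exp (-γ * |t|))

/-- `H(0) = γ` and `H(n) = γ + ∑_{k=1}^n (2^{−k} − (1 − (1/2)e^{−γ})^k)/k` for `n ≥ 1`. -/
noncomputable def Hfun (γ : ℝ) (n : ℕ) : ℝ :=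
  γ + ∑ k ∈ Finset.Icc 1 n,
    (((1 : ℝ) / 2) ^ k - (1 - (1 / 2) * Real.exp (-γ)) ^ k) / k

/-- `k_γ(m)`, the closed-form expression for `exp` of the maximal entrywise information
leakage of the Report-Noisy-Max mechanism with Laplace(1/γ) noise and `m` classes. -/
noncomputable def kfun (γ : ℝ) (m : ℕ) : ℝ :=
  (1 - (m : ℝ)) / m * ((1 : ℝ) / 2) ^ m * Real.exp (-γ)
    + (1 / m) * Real.exp γ * (1 - (1 - (1 / 2) * Real.exp (-γ)) ^ m)
    + (1 / 2) * (1 - (1 / 2) * Real.exp (-γ)) ^ (m - 1)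
    - ((m : ℝ) - 1) / 4 * Real.exp (-γ) * Hfun γ (m - 2)

lemma sum_Icc_one_eq (f : ℕ → ℝ) (n : ℕ) :
    ∑ k ∈ Finset.Icc 1 n, f k = ∑ i ∈ Finset.range n, f (i + 1) := by
  induction n with
  | zero => simp
  | succ n ih => rw [Finset.sum_Icc_succ_top (by omega), Finset.sum_range_succ, ih]

/-- for `γ > 0`, the sequence `H(m)` is (i) nonnegative,
(ii) monotonically non-increasing, and (iii) converges to `0` as `m → ∞`. -/
theorem stmt14 (γ : ℝ) (hγ : 0 < γ) :
    (∀ m : ℕ, 0 ≤ Hfun γ m) ∧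
    (∀ m : ℕ, Hfun γ (m + 1) ≤ Hfun γ m) ∧
    Filter.Tendsto (Hfun γ) Filter.atTop (nhds 0) := by
  set a : ℝ := 1 / 2 with ha_def
  set b : ℝ := 1 - 1 / 2 * Real.exp (-γ) with hb_def
  have hexp0 : 0 < Real.exp (-γ) := Real.exp_pos _
  have hexp1 : Real.exp (-γ) < 1 := Real.exp_lt_one_iff.mpr (by linarith)
  have hab : a ≤ b := by rw [ha_def, hb_def]; nlinarith
  have ha0 : 0 ≤ a := by norm_num [ha_def]
  have ha : |a| < 1 := by rw [abs_of_nonneg ha0]; norm_num [ha_def]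
  have hb : |b| < 1 := by
    rw [abs_of_nonneg (le_trans ha0 hab)]; rw [hb_def]; nlinarith
  -- key tendsto
  have hs1 := Real.hasSum_pow_div_log_of_abs_lt_one ha
  have hs2 := Real.hasSum_pow_div_log_of_abs_lt_one hb
  have hsum : HasSum (fun k : ℕ => (a ^ (k + 1) - b ^ (k + 1)) / (k + 1))
      (-Real.log (1 - a) - -Real.log (1 - b)) := by
    have := hs1.sub hs2
    simpa [sub_div] using this
  have hval : -Real.log (1 - a) - -Real.log (1 - b) = -γ := by
    have h1 : (1 : ℝ) - a = 1 / 2 := by rw [ha_def]; ring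
    have h2 : (1 : ℝ) - b = 1 / 2 * Real.exp (-γ) := by rw [hb_def]; ring
    rw [h1, h2, Real.log_mul (by norm_num) (ne_of_gt hexp0), Real.log_exp]
    ring
  rw [hval] at hsum
  have hH : ∀ n : ℕ, Hfun γ n
      = γ + ∑ i ∈ Finset.range n, (a ^ (i + 1) - b ^ (i + 1)) / (i + 1) := by
    intro n
    rw [Hfun, sum_Icc_one_eq]
    congr 1
    refine Finset.sum_congr rfl fun i _ => ?_
    rw [ha_def, hb_def]
    push_cast
    ring_nf
  have htend : Filter.Tendsto (Hfun γ) Filter.atTop (nhds 0) := by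
    have := (hsum.tendsto_sum_nat.const_add γ)
    have h0 : γ + -γ = 0 := by ring
    rw [h0] at this
    refine this.congr fun n => (hH n).symm
  have hanti : ∀ m : ℕ, Hfun γ (m + 1) ≤ Hfun γ m := by
    intro m
    rw [hH m, hH (m + 1), Finset.sum_range_succ]
    have : (a ^ (m + 1) - b ^ (m + 1)) / (m + 1 : ℕ) ≤ 0 := by
      apply div_nonpos_of_nonpos_of_nonneg
      · have := pow_le_pow_left₀ ha0 hab (m + 1)
        linarith
      · positivity
    push_cast at this
    linarith
  refine ⟨?_, hanti, htend⟩
  intro m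
  have : Antitone (Hfun γ) := antitone_nat_of_succ_le hanti
  exact this.le_of_tendsto htend m
end

section
/- Let γ > 0, let m ≥ 2 be an integer, and let N₁, …, N_m be i.i.d. real random variables with Laplace density g(t) = (γ/2)·e^{−γ|t|}. Then for every v ∈ ℝ_{≥0}^m, ∑_{j=1}^m ℙ( v_j + N_j + 1 > v_l + N_l for all l ≠ j ) ≤ e^{γ}. Equivalently, the entrywise information leakage of a single query through the Report-Noisy-Max aggregation mechanism with Laplace(1/γ) noise is at most γ: log ∑_{j=1}^m ℙ( v_j + N_j + 1 > v_l + N_l for all l ≠ j ) ≤ γ. -/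
open MeasureTheory Finset Real

open scoped ENNReal

noncomputable def lapAux (γ : ℝ) : Measure ℝ :=
  volume.withDensity fun t => ENNReal.ofReal (γ / 2 * Real.exp (-γ * |t|))

lemma lapAux_prob {γ : ℝ} (hγ : 0 < γ) : IsProbabilityMeasure (lapAux γ) := by
  constructor
  rw [lapAux, withDensity_apply _ MeasurableSet.univ, Measure.restrict_univ]
  have h1 : IntegrableOn (fun x : ℝ => Real.exp (-γ * |x|)) (Set.Ioi 0) := by
    refine ((exp_neg_integrableOn_Ioi 0 hγ)).congr_fun (fun x hx => ?_) measurableSet_Ioi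
    rw [abs_of_pos hx]
  have h2 : IntegrableOn (fun x : ℝ => Real.exp (-γ * |x|)) (Set.Iic 0) := by
    rw [← Measure.map_neg_eq_self (volume : Measure ℝ)]
    have m : MeasurableEmbedding fun x : ℝ => -x := (Homeomorph.neg ℝ).measurableEmbedding
    rw [m.integrableOn_map_iff]
    simp_rw [Function.comp_def, abs_neg, Set.neg_preimage, Set.neg_Iic, neg_zero]
    exact Iff.mpr integrableOn_Ici_iff_integrableOn_Ioi h1
  have hint : Integrable (fun x : ℝ => Real.exp (-γ * |x|)) := by
    rw [← integrableOn_univ, ← Set.Iic_union_Ioi (a := (0:ℝ))]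
    exact h2.union h1
  have hint2 : Integrable (fun t : ℝ => γ / 2 * Real.exp (-γ * |t|)) := hint.const_mul _
  rw [← ofReal_integral_eq_lintegral_ofReal hint2
    (Filter.Eventually.of_forall fun t => by positivity)]
  have hval : ∫ t : ℝ, γ / 2 * Real.exp (-γ * |t|) = 1 := by
    rw [integral_const_mul]
    have : ∫ t : ℝ, Real.exp (-γ * |t|) = 2 * ∫ x in Set.Ioi (0:ℝ), Real.exp (-γ * x) := by
      simp_rw [show ∀ t : ℝ, -γ * t = -(γ * t) from fun t => by ring]
      exact integral_comp_abs (f := fun u => Real.exp (-(γ * u)))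
    rw [this]
    have := integral_comp_mul_left_Ioi (fun u => Real.exp (-u)) 0 hγ
    simp only [mul_zero, neg_mul] at this ⊢
    rw [this, integral_exp_neg_Ioi_zero, smul_eq_mul, mul_one]
    field_simp
  rw [hval, ENNReal.ofReal_one]

lemma lapAux_Ioi_shift {γ : ℝ} (hγ : 0 < γ) (c : ℝ) :
    lapAux γ (Set.Ioi (c - 1)) ≤ ENNReal.ofReal (Real.exp γ) * lapAux γ (Set.Ioi c) := by
  set g : ℝ → ℝ≥0∞ := fun t => ENNReal.ofReal (γ / 2 * Real.exp (-γ * |t|)) with hg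
  have hlap : lapAux γ = volume.withDensity g := rfl
  have hpt : ∀ t : ℝ, g (t - 1) ≤ ENNReal.ofReal (Real.exp γ) * g t := by
    intro t
    rw [show g = fun t => ENNReal.ofReal (γ / 2 * Real.exp (-γ * |t|)) from hg, ← ENNReal.ofReal_mul (Real.exp_pos γ).le]
    apply ENNReal.ofReal_le_ofReal
    have h2 : |t| - |t - 1| ≤ |t - (t - 1)| := abs_sub_abs_le_abs_sub t (t - 1)
    have h3 : |t - (t - 1)| = 1 := by norm_num
    have h1 : -γ * |t - 1| ≤ γ + -γ * |t| := by nlinarith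
    calc γ / 2 * Real.exp (-γ * |t - 1|) ≤ γ / 2 * Real.exp (γ + -γ * |t|) :=
          mul_le_mul_of_nonneg_left (Real.exp_le_exp.mpr h1) (by linarith)
      _ = Real.exp γ * (γ / 2 * Real.exp (-γ * |t|)) := by rw [Real.exp_add]; ring
  have key : lapAux γ (Set.Ioi (c - 1))
      = ∫⁻ t, (Set.Ioi c).indicator (fun s => g (s - 1)) t := by
    rw [hlap, withDensity_apply _ measurableSet_Ioi, ← lintegral_indicator measurableSet_Ioi]
    rw [← lintegral_add_right_eq_self (fun t => (Set.Ioi (c - 1)).indicator g t) (-1)]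
    congr 1; funext t
    by_cases h : c < t
    · simp [Set.indicator, h, show c - 1 < t + -1 from by linarith, sub_eq_add_neg]
    · have h' : ¬ (c - 1 < t + -1) := fun hh => h (by linarith)
      simp [Set.indicator, h, h']
  calc lapAux γ (Set.Ioi (c - 1))
      = ∫⁻ t, (Set.Ioi c).indicator (fun s => g (s - 1)) t := key
    _ ≤ ∫⁻ t, (Set.Ioi c).indicator (fun s => ENNReal.ofReal (Real.exp γ) * g s) t :=
        lintegral_mono fun t => Set.indicator_le_indicator' (fun _ => hpt t)
    _ = ∫⁻ t in Set.Ioi c, ENNReal.ofReal (Real.exp γ) * g t :=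
        lintegral_indicator measurableSet_Ioi _
    _ = ENNReal.ofReal (Real.exp γ) * ∫⁻ t in Set.Ioi c, g t :=
        lintegral_const_mul' _ _ ENNReal.ofReal_ne_top
    _ = ENNReal.ofReal (Real.exp γ) * lapAux γ (Set.Ioi c) := by
        rw [hlap, withDensity_apply _ measurableSet_Ioi]

/-- for i.i.d. Laplace(1/γ) noise and every known-vote histogram
`v ∈ ℝ_{≥0}^m`, `∑_j ℙ(v_j + N_j + 1 > v_l + N_l for all l ≠ j) ≤ e^γ`; equivalently,
the entrywise information leakage of a single Report-Noisy-Max query is at most `γ`. -/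
theorem stmt18 (γ : ℝ) (hγ : 0 < γ) (m : ℕ) (hm : 2 ≤ m)
    (v : Fin m → ℝ) (hv : ∀ i, 0 ≤ v i) :
    (∑ j : Fin m, (laplacePi γ m
        {x | ∀ l : Fin m, l ≠ j → v j + x j + 1 > v l + x l}).toReal
      ≤ Real.exp γ) ∧
    Real.log (∑ j : Fin m, (laplacePi γ m
        {x | ∀ l : Fin m, l ≠ j → v j + x j + 1 > v l + x l}).toReal) ≤ γ := by
  obtain ⟨n, rfl⟩ : ∃ n, m = n + 2 := ⟨m - 2, by omega⟩
  haveI hprob : IsProbabilityMeasure (lapAux γ) := lapAux_prob hγ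
  set μ : Measure (Fin (n + 2) → ℝ) := Measure.pi fun _ => lapAux γ with hμdef
  have hlp : laplacePi γ (n + 2) = μ := rfl
  haveI : IsProbabilityMeasure μ := by rw [hμdef]; infer_instance
  set B : ℝ → Fin (n + 2) → Set (Fin (n + 2) → ℝ) :=
    fun c j => {x | ∀ l, l ≠ j → v l + x l < v j + x j + c} with hB
  have hBmeas : ∀ c j, MeasurableSet (B c j) := by
    intro c j
    have h : B c j = ⋂ l, ⋂ (_ : l ≠ j), {x : Fin (n + 2) → ℝ | v l + x l < v j + x j + c} := by
      ext x; simp [hB, Set.mem_iInter]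
    rw [h]
    exact MeasurableSet.iInter fun l => MeasurableSet.iInter fun _ =>
      measurableSet_lt (measurable_const.add (measurable_pi_apply l))
        ((measurable_const.add (measurable_pi_apply j)).add measurable_const)
  have hset : ∀ j : Fin (n + 2),
      {x : Fin (n + 2) → ℝ | ∀ l, l ≠ j → v j + x j + 1 > v l + x l} = B 1 j := fun j => rfl
  -- key estimate
  have hkey : ∀ j, μ (B 1 j) ≤ ENNReal.ofReal (Real.exp γ) * μ (B 0 j) := by
    intro j
    set ν : Measure (Fin (n + 1) → ℝ) := Measure.pi fun _ => lapAux γ with hν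
    set e := MeasurableEquiv.piFinSuccAbove (fun _ : Fin (n + 2) => ℝ) j with he
    have hmp := measurePreserving_piFinSuccAbove (fun _ : Fin (n + 2) => lapAux γ) j
    have hμS : ∀ S : Set (Fin (n + 2) → ℝ), MeasurableSet S →
        μ S = ((lapAux γ).prod ν) (e.symm ⁻¹' S) := by
      intro S hS
      rw [← hmp.map_eq, Measure.map_apply e.measurable (e.symm.measurable hS)]
      congr 1
      ext x
      simp
    set M : (Fin (n + 1) → ℝ) → ℝ :=
      fun y => Finset.univ.sup' ⟨⟨0, Nat.succ_pos n⟩, Finset.mem_univ _⟩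
        (fun k => v (j.succAbove k) + y k) with hM
    have hslice : ∀ (c : ℝ) (y : Fin (n + 1) → ℝ),
        ((fun t => (t, y)) ⁻¹' (e.symm ⁻¹' (B c j))) = Set.Ioi (M y - v j - c) := by
      intro c y
      ext t
      simp only [Set.mem_preimage, Set.mem_Ioi, hB, Set.mem_setOf_eq, he,
        MeasurableEquiv.piFinSuccAbove_symm_apply, Fin.insertNthEquiv_apply, Fin.insertNth_apply_same]
      constructor
      · intro h
        have h' : ∀ k : Fin (n + 1), v (j.succAbove k) + y k < v j + t + c := by
          intro k
          have hk := h (j.succAbove k) (j.succAbove_ne k)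
          rwa [Fin.insertNth_apply_succAbove] at hk
        have hs := (Finset.sup'_lt_iff (f := fun k => v (j.succAbove k) + y k)
          (a := v j + t + c) ⟨⟨0, Nat.succ_pos n⟩, Finset.mem_univ _⟩).mpr
          (fun k _ => h' k)
        rw [hM]
        linarith
      · intro ht l hl
        obtain ⟨k, rfl⟩ := Fin.exists_succAbove_eq hl
        rw [Fin.insertNth_apply_succAbove]
        have hle : v (j.succAbove k) + y k ≤ M y :=
          Finset.le_sup' (fun k => v (j.succAbove k) + y k) (Finset.mem_univ k)
        linarith
    have happly : ∀ c : ℝ, μ (B c j) = ∫⁻ y, lapAux γ (Set.Ioi (M y - v j - c)) ∂ν := by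
      intro c
      rw [hμS _ (hBmeas c j), Measure.prod_apply_symm (e.symm.measurable (hBmeas c j))]
      congr 1
      funext y
      rw [hslice c y]
    rw [happly 1, happly 0]
    calc ∫⁻ y, lapAux γ (Set.Ioi (M y - v j - 1)) ∂ν
        ≤ ∫⁻ y, ENNReal.ofReal (Real.exp γ) * lapAux γ (Set.Ioi (M y - v j - 0)) ∂ν := by
          refine lintegral_mono fun y => ?_
          have := lapAux_Ioi_shift hγ (M y - v j)
          rw [sub_zero]
          exact this
      _ = ENNReal.ofReal (Real.exp γ) * ∫⁻ y, lapAux γ (Set.Ioi (M y - v j - 0)) ∂ν :=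
          lintegral_const_mul' _ _ ENNReal.ofReal_ne_top
  -- disjointness
  have hdisj : Pairwise (Function.onFun Disjoint (B 0)) := by
    intro j j' hjj'
    rw [Function.onFun, Set.disjoint_left]
    intro x hx hx'
    have h1 := hx j' (Ne.symm hjj')
    have h2 := hx' j hjj'
    linarith
  have hsum : ∑ j, μ (B 0 j) ≤ 1 := by
    rw [← tsum_fintype (L := SummationFilter.unconditional _), ← measure_iUnion hdisj (fun j => hBmeas 0 j)]
    exact prob_le_one
  have htotal : ∑ j, μ (B 1 j) ≤ ENNReal.ofReal (Real.exp γ) :=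
    calc ∑ j, μ (B 1 j) ≤ ∑ j, ENNReal.ofReal (Real.exp γ) * μ (B 0 j) :=
          Finset.sum_le_sum fun j _ => hkey j
      _ = ENNReal.ofReal (Real.exp γ) * ∑ j, μ (B 0 j) := by rw [Finset.mul_sum]
      _ ≤ ENNReal.ofReal (Real.exp γ) * 1 := mul_le_mul_right hsum _
      _ = ENNReal.ofReal (Real.exp γ) := mul_one _
  have hfirst : ∑ j : Fin (n + 2), (laplacePi γ (n + 2)
      {x | ∀ l : Fin (n + 2), l ≠ j → v j + x j + 1 > v l + x l}).toReal ≤ Real.exp γ := by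
    calc ∑ j : Fin (n + 2), (laplacePi γ (n + 2)
          {x | ∀ l : Fin (n + 2), l ≠ j → v j + x j + 1 > v l + x l}).toReal
        = ∑ j, (μ (B 1 j)).toReal := by
          refine Finset.sum_congr rfl fun j _ => ?_
          rw [hlp, hset j]
      _ = (∑ j, μ (B 1 j)).toReal := (ENNReal.toReal_sum fun j _ => measure_ne_top μ _).symm
      _ ≤ Real.exp γ := ENNReal.toReal_le_of_le_ofReal (Real.exp_pos γ).le htotal
  refine ⟨hfirst, ?_⟩
  rcases eq_or_lt_of_le (Finset.sum_nonneg fun j (_ : j ∈ Finset.univ) =>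
      ENNReal.toReal_nonneg (a := laplacePi γ (n + 2)
        {x | ∀ l : Fin (n + 2), l ≠ j → v j + x j + 1 > v l + x l})) with h | h
  · rw [← h, Real.log_zero]; exact hγ.le
  · exact (Real.log_le_iff_le_exp h).mpr hfirst
end
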